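/- arXiv:1910.02865 — 5 statements merged into one kernel-verified Lean document; each statement's English description precedes it below -/
import Mathlib

section
/- Let u ∈ S^{d-1} and let a : ℝ → ℝ be such that ω ↦ a(ω·u) is σ-integrable on S^{d-1}. Write ⟨v,w⟩⊥ := v·w − (v·u)(w·u) for v, w ∈ ℝ^d. Then for all v₁, v₂, v₃, v₄ ∈ ℝ^d, ∫_{S^{d-1}} a(ω·u) (ω⊥·v₁)(ω⊥·v₂)(ω⊥·v₃)(ω⊥·v₄) dσ(ω) = (1/((d−1)(d+1))) · (∫_{S^{d-1}} a(ω·u)(1 − (ω·u)²)² dσ(ω)) · [⟨v₁,v₂⟩⊥⟨v₃,v₄⟩⊥ + ⟨v₁,v₃⟩⊥⟨v₂,v₄⟩⊥ + ⟨v₁,v₄⟩⊥⟨v₂,v₃⟩⊥]. -/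
/-!
Restricted to `uᗮ`, the weighted moment `(p₁, …, p₄) ↦ ∫ a(ω·u) ∏ (ω·pᵢ) dσ` is determined by
its quartic `Q v = ∫ a(ω·u) (ω·v)⁴ dσ`. A reflection fixing `u` maps any `v ∈ uᗮ` to any other
vector of `uᗮ` of the same length, so invariance of `σ` gives `Q v = c ‖v‖⁴`, and polarising
twice gives the moment as `c/3` times the symmetrised products of inner products. Summing the
case `p₁ = p₂ = bᵢ`, `p₃ = p₄ = bⱼ` over an orthonormal basis `(bᵢ)` of `uᗮ`, for which
`1 - (ω·u)² = ∑ (ω·bᵢ)²`, identifies `c/3` as `∫ a(ω·u)(1 - (ω·u)²)² dσ / ((d-1)(d+1))`.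
Finally `ω⊥·v = ω·v⊥` and `⟨v, w⟩⊥ = v⊥·w⊥`.
-/

open MeasureTheory Metric
open scoped RealInnerProductSpace

/-- The map induced on the unit sphere by a linear isometry of `EuclideanSpace ℝ (Fin d)`. -/
noncomputable def sphereRot {d : ℕ}
    (e : EuclideanSpace ℝ (Fin d) ≃ₗᵢ[ℝ] EuclideanSpace ℝ (Fin d))
    (ω : sphere (0 : EuclideanSpace ℝ (Fin d)) 1) :
    sphere (0 : EuclideanSpace ℝ (Fin d)) 1 :=
  ⟨e ω, by
    have hω := ω.2
    simp only [mem_sphere_iff_norm, sub_zero] at hω ⊢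
    rw [e.norm_map]
    exact hω⟩

section WeightedIntegral

variable {X : Type*} [TopologicalSpace X] [CompactSpace X] [MeasurableSpace X]
  [OpensMeasurableSpace X] {μ : Measure X} {w : X → ℝ}

theorem MeasureTheory.Integrable.mul_continuousMap (hw : Integrable w μ) (g : C(X, ℝ)) :
    Integrable (fun x => w x * g x) μ :=
  hw.mul_bdd g.continuous.aestronglyMeasurable (ae_of_all _ g.norm_coe_le_norm)

noncomputable def weightedIntegral (hw : Integrable w μ) : C(X, ℝ) →ₗ[ℝ] ℝ where
  toFun g := ∫ x, w x * g x ∂μ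
  map_add' g h := by
    simp only [ContinuousMap.add_apply, mul_add]
    exact integral_add (hw.mul_continuousMap g) (hw.mul_continuousMap h)
  map_smul' c g := by
    simp only [ContinuousMap.smul_apply, smul_eq_mul, RingHom.id_apply, mul_left_comm _ c,
      integral_const_mul]

theorem weightedIntegral_apply (hw : Integrable w μ) (g : C(X, ℝ)) :
    weightedIntegral hw g = ∫ x, w x * g x ∂μ :=
  rfl

end WeightedIntegral

section InnerProductSpace

variable {F : Type*} [NormedAddCommGroup F] [InnerProductSpace ℝ F]

noncomputable def sphereCoord : F →ₗ[ℝ] C(sphere (0 : F) 1, ℝ) where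
  toFun v := ⟨fun ω => ⟪(ω : F), v⟫, by fun_prop⟩
  map_add' v w := by ext ω; simp [inner_add_right]
  map_smul' c v := by ext ω; simp [real_inner_smul_right]

@[simp]
theorem sphereCoord_apply (v : F) (ω : sphere (0 : F) 1) : sphereCoord v ω = ⟪(ω : F), v⟫ :=
  rfl

theorem exists_linearIsometryEquiv_fixing_apply_eq_of_norm_eq {u v w : F} (hv : ⟪u, v⟫ = 0)
    (hw : ⟪u, w⟫ = 0) (h : ‖v‖ = ‖w‖) : ∃ e : F ≃ₗᵢ[ℝ] F, e u = u ∧ e v = w := by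
  refine ⟨(ℝ ∙ (v - w))ᗮ.reflection, Submodule.reflection_mem_subspace_eq_self ?_,
    Submodule.reflection_sub h⟩
  rw [Submodule.mem_orthogonal_singleton_iff_inner_right, inner_sub_left, real_inner_comm,
    hv, real_inner_comm, hw, sub_zero]

theorem real_inner_sub_inner_smul_left (u x v : F) :
    ⟪x - ⟪x, u⟫ • u, v⟫ = ⟪x, v - ⟪v, u⟫ • u⟫ := by
  simp only [inner_sub_left, inner_sub_right, real_inner_smul_left, real_inner_smul_right,
    real_inner_comm u v]
  ring

theorem sub_inner_smul_mem_orthogonal_singleton {u : F} (hu : ‖u‖ = 1) (v : F) :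
    v - ⟪v, u⟫ • u ∈ (ℝ ∙ u)ᗮ := by
  rw [Submodule.mem_orthogonal_singleton_iff_inner_right, inner_sub_right, real_inner_smul_right,
    real_inner_self_eq_norm_sq, hu, real_inner_comm]
  ring

theorem real_inner_sub_inner_smul_sub_inner_smul {u : F} (hu : ‖u‖ = 1) (v w : F) :
    ⟪v - ⟪v, u⟫ • u, w - ⟪w, u⟫ • u⟫ = ⟪v, w⟫ - ⟪v, u⟫ * ⟪w, u⟫ := by
  simp only [inner_sub_left, inner_sub_right, real_inner_smul_left, real_inner_smul_right,
    real_inner_self_eq_norm_sq, hu, real_inner_comm u]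
  ring

theorem exists_orthonormalBasis_apply_eq [FiniteDimensional ℝ F] {ι : Type*} [Fintype ι]
    (hcard : Module.finrank ℝ F = Fintype.card ι) (i₀ : ι) {u : F} (hu : ‖u‖ = 1) :
    ∃ b : OrthonormalBasis ι ℝ F, b i₀ = u := by
  have hone : Orthonormal ℝ (({i₀} : Set ι).domRestrict fun _ => u) :=
    ⟨fun _ => hu, fun i j hij => (hij (Subsingleton.elim i j)).elim⟩
  obtain ⟨b, hb⟩ := hone.exists_orthonormalBasis_extension_of_card_eq hcard
  exact ⟨b, hb i₀ rfl⟩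

theorem one_sub_sphereCoord_sq_eq_sum_erase {ι : Type*} [Fintype ι] [DecidableEq ι]
    (b : OrthonormalBasis ι ℝ F) (i₀ : ι) :
    1 - sphereCoord (b i₀) ^ 2 = ∑ i ∈ Finset.univ.erase i₀, sphereCoord (b i) ^ 2 := by
  ext ω
  have hparseval := b.sum_sq_inner_left ω
  rw [← Finset.add_sum_erase _ _ (Finset.mem_univ i₀), norm_eq_of_mem_sphere] at hparseval
  simp only [ContinuousMap.sub_apply, ContinuousMap.one_apply, ContinuousMap.pow_apply,
    ContinuousMap.coe_sum, Finset.sum_apply, sphereCoord_apply]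
  linarith

end InnerProductSpace

section Polarization

variable {F A : Type*} [NormedAddCommGroup F] [InnerProductSpace ℝ F] [CommRing A] [Algebra ℝ A]
  (x : F →ₗ[ℝ] A) (L : A →ₗ[ℝ] ℝ) {K : Submodule ℝ F} {c : ℝ}

theorem map_sq_mul_sq_of_map_pow_four (hK : ∀ v ∈ K, L (x v ^ 4) = c * ‖v‖ ^ 4) {q r : F}
    (hq : q ∈ K) (hr : r ∈ K) :
    L (x q ^ 2 * x r ^ 2) = c / 3 * (‖q‖ ^ 2 * ‖r‖ ^ 2 + 2 * ⟪q, r⟫ ^ 2) := by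
  have hpolar : x q ^ 2 * x r ^ 2 =
      (12 : ℝ)⁻¹ • (x (q + r) ^ 4 + x (q - r) ^ 4 - (2 : ℝ) • x q ^ 4 - (2 : ℝ) • x r ^ 4) := by
    rw [map_add, map_sub]
    algebra
  rw [hpolar]
  simp only [L.map_smul, L.map_add, L.map_sub, smul_eq_mul]
  rw [hK _ (K.add_mem hq hr), hK _ (K.sub_mem hq hr), hK q hq, hK r hr,
    show (4 : ℕ) = 2 * 2 from rfl, pow_mul, pow_mul, norm_add_sq_real, norm_sub_sq_real]
  ring

theorem map_mul_mul_mul_of_map_pow_four (hK : ∀ v ∈ K, L (x v ^ 4) = c * ‖v‖ ^ 4)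
    {p₁ p₂ p₃ p₄ : F} (hp₁ : p₁ ∈ K) (hp₂ : p₂ ∈ K) (hp₃ : p₃ ∈ K) (hp₄ : p₄ ∈ K) :
    L (x p₁ * x p₂ * x p₃ * x p₄) =
      c / 3 * (⟪p₁, p₂⟫ * ⟪p₃, p₄⟫ + ⟪p₁, p₃⟫ * ⟪p₂, p₄⟫ + ⟪p₁, p₄⟫ * ⟪p₂, p₃⟫) := by
  have hpolar : x p₁ * x p₂ * x p₃ * x p₄ = (16 : ℝ)⁻¹ •
      (x (p₁ + p₂) ^ 2 * x (p₃ + p₄) ^ 2 - x (p₁ + p₂) ^ 2 * x (p₃ - p₄) ^ 2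
        - x (p₁ - p₂) ^ 2 * x (p₃ + p₄) ^ 2 + x (p₁ - p₂) ^ 2 * x (p₃ - p₄) ^ 2) := by
    simp only [map_add, map_sub]
    algebra
  have h₁₂ := K.add_mem hp₁ hp₂
  have h₁₂' := K.sub_mem hp₁ hp₂
  have h₃₄ := K.add_mem hp₃ hp₄
  have h₃₄' := K.sub_mem hp₃ hp₄
  rw [hpolar]
  simp only [L.map_smul, L.map_add, L.map_sub, smul_eq_mul,
    map_sq_mul_sq_of_map_pow_four x L hK h₁₂ h₃₄, map_sq_mul_sq_of_map_pow_four x L hK h₁₂ h₃₄',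
    map_sq_mul_sq_of_map_pow_four x L hK h₁₂' h₃₄, map_sq_mul_sq_of_map_pow_four x L hK h₁₂' h₃₄',
    norm_add_sq_real, norm_sub_sq_real, inner_add_left, inner_add_right, inner_sub_left,
    inner_sub_right]
  ring

theorem map_sum_sq_sq_of_map_pow_four (hK : ∀ v ∈ K, L (x v ^ 4) = c * ‖v‖ ^ 4) {ι : Type*}
    [DecidableEq ι] (s : Finset ι) {b : ι → F} (hb : Orthonormal ℝ b) (hbK : ∀ i ∈ s, b i ∈ K) :
    L ((∑ i ∈ s, x (b i) ^ 2) ^ 2) = c / 3 * (s.card * (s.card + 2)) := by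
  have hterm : ∀ i ∈ s, ∀ j ∈ s, L (x (b i) ^ 2 * x (b j) ^ 2) =
      c / 3 * (1 + 2 * if i = j then 1 else 0) := by
    intro i hi j hj
    rw [map_sq_mul_sq_of_map_pow_four x L hK (hbK i hi) (hbK j hj), orthonormal_iff_ite.mp hb,
      hb.1, hb.1]
    split_ifs <;> ring
  rw [sq, Finset.sum_mul_sum]
  simp only [map_sum]
  rw [Finset.sum_congr rfl fun i hi => Finset.sum_congr rfl (hterm i hi)]
  simp only [mul_add, mul_ite, mul_one, mul_zero, Finset.sum_add_distrib, Finset.sum_const,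
    nsmul_eq_mul, Finset.sum_ite_eq, Finset.sum_ite_mem, Finset.inter_self]
  ring

end Polarization

section Sphere

variable {d : ℕ}

local notation "E" => EuclideanSpace ℝ (Fin d)
local notation "S" => sphere (0 : EuclideanSpace ℝ (Fin d)) 1

theorem continuous_sphereRot (e : E ≃ₗᵢ[ℝ] E) : Continuous (sphereRot e) :=
  (e.continuous.comp continuous_subtype_val).subtype_mk _

theorem integral_comp_sphereRot {G : Type*} [NormedAddCommGroup G] [NormedSpace ℝ G]
    {σ : Measure S} {e : E ≃ₗᵢ[ℝ] E} (he : σ.map (sphereRot e) = σ) {f : S → G}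
    (hf : AEStronglyMeasurable f σ) : ∫ ω, f (sphereRot e ω) ∂σ = ∫ ω, f ω ∂σ := by
  conv_rhs => rw [← he]
  exact (integral_map (continuous_sphereRot e).aemeasurable (by rwa [he])).symm

variable {σ : Measure (sphere (0 : EuclideanSpace ℝ (Fin d)) 1)}
  {u : sphere (0 : EuclideanSpace ℝ (Fin d)) 1} {a : ℝ → ℝ}
  (hint : Integrable (fun ω : sphere (0 : EuclideanSpace ℝ (Fin d)) 1 =>
    a ⟪(ω : EuclideanSpace ℝ (Fin d)), (u : EuclideanSpace ℝ (Fin d))⟫) σ)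

theorem weightedIntegral_eq_of_comp_sphereRot {e : E ≃ₗᵢ[ℝ] E} (he : σ.map (sphereRot e) = σ)
    (heu : e (u : E) = u) {g h : C(S, ℝ)} (hgh : ∀ ω, h (sphereRot e ω) = g ω) :
    weightedIntegral hint h = weightedIntegral hint g := by
  have hweight (ω : S) : ⟪(sphereRot e ω : E), (u : E)⟫ = ⟪(ω : E), (u : E)⟫ := by
    conv_lhs => rw [← heu]
    exact e.inner_map_map _ _
  rw [weightedIntegral_apply, weightedIntegral_apply,
    ← integral_comp_sphereRot he (hint.mul_continuousMap h).aestronglyMeasurable]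
  simp only [hweight, hgh]

theorem weightedIntegral_sphereCoord_pow_four_eq_mul_norm
    (hσ : ∀ e : E ≃ₗᵢ[ℝ] E, e (u : E) = u → σ.map (sphereRot e) = σ) {e₀ : E} (he₀ : ‖e₀‖ = 1)
    (hue₀ : ⟪(u : E), e₀⟫ = 0) {v : E} (hv : ⟪(u : E), v⟫ = 0) :
    weightedIntegral hint (sphereCoord v ^ 4) =
      weightedIntegral hint (sphereCoord e₀ ^ 4) * ‖v‖ ^ 4 := by
  obtain ⟨e, heu, hev⟩ := exists_linearIsometryEquiv_fixing_apply_eq_of_norm_eq hv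
    (w := ‖v‖ • e₀) (by rw [real_inner_smul_right, hue₀, mul_zero])
    (by rw [norm_smul, he₀, norm_norm, mul_one])
  have hrot : ∀ ω, (sphereCoord (‖v‖ • e₀) ^ 4) (sphereRot e ω) = (sphereCoord v ^ 4) ω := by
    intro ω
    simp only [ContinuousMap.pow_apply, sphereCoord_apply, ← hev]
    rw [show (sphereRot e ω : E) = e ω from rfl, e.inner_map_map]
  rw [← weightedIntegral_eq_of_comp_sphereRot hint (hσ e heu) heu hrot, map_smul, smul_pow,
    map_smul, smul_eq_mul, mul_comm]

theorem weightedIntegral_sphereCoord_mul_mul_mul_of_mem_orthogonal (hd : 2 ≤ d)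
    (hσ : ∀ e : E ≃ₗᵢ[ℝ] E, e (u : E) = u → σ.map (sphereRot e) = σ) {p₁ p₂ p₃ p₄ : E}
    (hp₁ : p₁ ∈ (ℝ ∙ (u : E))ᗮ) (hp₂ : p₂ ∈ (ℝ ∙ (u : E))ᗮ) (hp₃ : p₃ ∈ (ℝ ∙ (u : E))ᗮ)
    (hp₄ : p₄ ∈ (ℝ ∙ (u : E))ᗮ) :
    weightedIntegral hint (sphereCoord p₁ * sphereCoord p₂ * sphereCoord p₃ * sphereCoord p₄) =
      1 / (((d : ℝ) - 1) * ((d : ℝ) + 1)) *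
        weightedIntegral hint ((1 - sphereCoord (u : E) ^ 2) ^ 2) *
        (⟪p₁, p₂⟫ * ⟪p₃, p₄⟫ + ⟪p₁, p₃⟫ * ⟪p₂, p₄⟫ + ⟪p₁, p₄⟫ * ⟪p₂, p₃⟫) := by
  set i₀ : Fin d := ⟨0, by omega⟩
  obtain ⟨b, hb⟩ := exists_orthonormalBasis_apply_eq finrank_euclideanSpace i₀
    (norm_eq_of_mem_sphere u)
  have hbK : ∀ i ∈ Finset.univ.erase i₀, b i ∈ (ℝ ∙ (u : E))ᗮ := fun i hi => by
    rw [Submodule.mem_orthogonal_singleton_iff_inner_right, ← hb]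
    exact b.orthonormal.2 (Finset.ne_of_mem_erase hi).symm
  have hQ : ∀ v ∈ (ℝ ∙ (u : E))ᗮ, weightedIntegral hint (sphereCoord v ^ 4) =
      weightedIntegral hint (sphereCoord (b ⟨1, by omega⟩) ^ 4) * ‖v‖ ^ 4 := fun v hv =>
    weightedIntegral_sphereCoord_pow_four_eq_mul_norm hint hσ (b.orthonormal.1 _)
      (Submodule.mem_orthogonal_singleton_iff_inner_right.mp (hbK _ (by simp [i₀])))
      (Submodule.mem_orthogonal_singleton_iff_inner_right.mp hv)
  have hparseval : 1 - sphereCoord (u : E) ^ 2 =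
      ∑ i ∈ Finset.univ.erase i₀, sphereCoord (b i) ^ 2 :=
    hb ▸ one_sub_sphereCoord_sq_eq_sum_erase b i₀
  rw [map_mul_mul_mul_of_map_pow_four _ _ hQ hp₁ hp₂ hp₃ hp₄, hparseval,
    map_sum_sq_sq_of_map_pow_four _ _ hQ _ b.orthonormal hbK, Finset.card_erase_of_mem
    (Finset.mem_univ _), Finset.card_univ, Fintype.card_fin, Nat.cast_sub (by omega)]
  have hd' : (2 : ℝ) ≤ d := by exact_mod_cast hd
  have hd₁ : (d : ℝ) - 1 ≠ 0 := by linarith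
  have hd₂ : (d : ℝ) + 1 ≠ 0 := by linarith
  field_simp
  ring

end Sphere

theorem stmt3_general (d : ℕ) (hd : 2 ≤ d)
    (σ : Measure (sphere (0 : EuclideanSpace ℝ (Fin d)) 1))
    (hσ : ∀ e : EuclideanSpace ℝ (Fin d) ≃ₗᵢ[ℝ] EuclideanSpace ℝ (Fin d),
      σ.map (sphereRot e) = σ)
    (u : sphere (0 : EuclideanSpace ℝ (Fin d)) 1)
    (a : ℝ → ℝ)
    (hint : Integrable (fun ω : sphere (0 : EuclideanSpace ℝ (Fin d)) 1 =>
      a ⟪(ω : EuclideanSpace ℝ (Fin d)), (u : EuclideanSpace ℝ (Fin d))⟫) σ)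
    (perp : sphere (0 : EuclideanSpace ℝ (Fin d)) 1 → EuclideanSpace ℝ (Fin d))
    (hperp : ∀ ω : sphere (0 : EuclideanSpace ℝ (Fin d)) 1,
      perp ω = (ω : EuclideanSpace ℝ (Fin d)) -
        ⟪(ω : EuclideanSpace ℝ (Fin d)), (u : EuclideanSpace ℝ (Fin d))⟫ •
          (u : EuclideanSpace ℝ (Fin d)))
    (ip : EuclideanSpace ℝ (Fin d) → EuclideanSpace ℝ (Fin d) → ℝ)
    (hip : ∀ v w : EuclideanSpace ℝ (Fin d),
      ip v w = ⟪v, w⟫ - ⟪v, (u : EuclideanSpace ℝ (Fin d))⟫ * ⟪w, (u : EuclideanSpace ℝ (Fin d))⟫)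
    (v₁ v₂ v₃ v₄ : EuclideanSpace ℝ (Fin d)) :
    ∫ ω, a ⟪(ω : EuclideanSpace ℝ (Fin d)), (u : EuclideanSpace ℝ (Fin d))⟫ *
        ⟪perp ω, v₁⟫ * ⟪perp ω, v₂⟫ * ⟪perp ω, v₃⟫ * ⟪perp ω, v₄⟫ ∂σ
      = (1 / (((d : ℝ) - 1) * ((d : ℝ) + 1))) *
          (∫ ω, a ⟪(ω : EuclideanSpace ℝ (Fin d)), (u : EuclideanSpace ℝ (Fin d))⟫ *
            (1 - ⟪(ω : EuclideanSpace ℝ (Fin d)), (u : EuclideanSpace ℝ (Fin d))⟫ ^ 2) ^ 2 ∂σ) *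
          (ip v₁ v₂ * ip v₃ v₄ + ip v₁ v₃ * ip v₂ v₄ + ip v₁ v₄ * ip v₂ v₃) := by
  have hu : ‖(u : EuclideanSpace ℝ (Fin d))‖ = 1 := norm_eq_of_mem_sphere u
  have hmem := sub_inner_smul_mem_orthogonal_singleton hu
  have hmoment : ∫ ω, a ⟪(ω : EuclideanSpace ℝ (Fin d)), (u : EuclideanSpace ℝ (Fin d))⟫ *
        ⟪perp ω, v₁⟫ * ⟪perp ω, v₂⟫ * ⟪perp ω, v₃⟫ * ⟪perp ω, v₄⟫ ∂σ =
      weightedIntegral hint (sphereCoord (v₁ - ⟪v₁, (u : EuclideanSpace ℝ (Fin d))⟫ • u) *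
        sphereCoord (v₂ - ⟪v₂, (u : EuclideanSpace ℝ (Fin d))⟫ • u) *
        sphereCoord (v₃ - ⟪v₃, (u : EuclideanSpace ℝ (Fin d))⟫ • u) *
        sphereCoord (v₄ - ⟪v₄, (u : EuclideanSpace ℝ (Fin d))⟫ • u)) := by
    simp only [weightedIntegral_apply, ContinuousMap.mul_apply, sphereCoord_apply, hperp,
      real_inner_sub_inner_smul_left, mul_assoc]
  have hweight : ∫ ω, a ⟪(ω : EuclideanSpace ℝ (Fin d)), (u : EuclideanSpace ℝ (Fin d))⟫ *
        (1 - ⟪(ω : EuclideanSpace ℝ (Fin d)), (u : EuclideanSpace ℝ (Fin d))⟫ ^ 2) ^ 2 ∂σ =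
      weightedIntegral hint ((1 - sphereCoord (u : EuclideanSpace ℝ (Fin d)) ^ 2) ^ 2) := by
    simp only [weightedIntegral_apply, ContinuousMap.pow_apply, ContinuousMap.sub_apply,
      ContinuousMap.one_apply, sphereCoord_apply]
  rw [hmoment, hweight, weightedIntegral_sphereCoord_mul_mul_mul_of_mem_orthogonal hint hd (fun e _ => hσ e)
    (hmem v₁) (hmem v₂) (hmem v₃) (hmem v₄)]
  simp only [hip, real_inner_sub_inner_smul_sub_inner_smul hu]

/-- the fourth moment of `ω⊥`:
`∫ a(ω·u)(ω⊥·v₁)(ω⊥·v₂)(ω⊥·v₃)(ω⊥·v₄) dσ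
  = (1/((d−1)(d+1))) (∫ a(ω·u)(1−(ω·u)²)² dσ)
    (⟨v₁,v₂⟩⊥⟨v₃,v₄⟩⊥ + ⟨v₁,v₃⟩⊥⟨v₂,v₄⟩⊥ + ⟨v₁,v₄⟩⊥⟨v₂,v₃⟩⊥)`,
where `⟨v,w⟩⊥ = v·w − (v·u)(w·u)` and `ω⊥ = ω − (ω·u)u`. -/
theorem stmt3 (d : ℕ) (hd : 2 ≤ d)
    (σ : Measure (sphere (0 : EuclideanSpace ℝ (Fin d)) 1))
    [IsProbabilityMeasure σ]
    (hσ : ∀ e : EuclideanSpace ℝ (Fin d) ≃ₗᵢ[ℝ] EuclideanSpace ℝ (Fin d),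
      σ.map (sphereRot e) = σ)
    (u : sphere (0 : EuclideanSpace ℝ (Fin d)) 1)
    (a : ℝ → ℝ)
    (hint : Integrable (fun ω : sphere (0 : EuclideanSpace ℝ (Fin d)) 1 =>
      a ⟪(ω : EuclideanSpace ℝ (Fin d)), (u : EuclideanSpace ℝ (Fin d))⟫) σ)
    (perp : sphere (0 : EuclideanSpace ℝ (Fin d)) 1 → EuclideanSpace ℝ (Fin d))
    (hperp : ∀ ω : sphere (0 : EuclideanSpace ℝ (Fin d)) 1,
      perp ω = (ω : EuclideanSpace ℝ (Fin d)) -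
        ⟪(ω : EuclideanSpace ℝ (Fin d)), (u : EuclideanSpace ℝ (Fin d))⟫ •
          (u : EuclideanSpace ℝ (Fin d)))
    (ip : EuclideanSpace ℝ (Fin d) → EuclideanSpace ℝ (Fin d) → ℝ)
    (hip : ∀ v w : EuclideanSpace ℝ (Fin d),
      ip v w = ⟪v, w⟫ - ⟪v, (u : EuclideanSpace ℝ (Fin d))⟫ * ⟪w, (u : EuclideanSpace ℝ (Fin d))⟫)
    (v₁ v₂ v₃ v₄ : EuclideanSpace ℝ (Fin d)) :
    ∫ ω, a ⟪(ω : EuclideanSpace ℝ (Fin d)), (u : EuclideanSpace ℝ (Fin d))⟫ *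
        ⟪perp ω, v₁⟫ * ⟪perp ω, v₂⟫ * ⟪perp ω, v₃⟫ * ⟪perp ω, v₄⟫ ∂σ
      = (1 / (((d : ℝ) - 1) * ((d : ℝ) + 1))) *
          (∫ ω, a ⟪(ω : EuclideanSpace ℝ (Fin d)), (u : EuclideanSpace ℝ (Fin d))⟫ *
            (1 - ⟪(ω : EuclideanSpace ℝ (Fin d)), (u : EuclideanSpace ℝ (Fin d))⟫ ^ 2) ^ 2 ∂σ) *
          (ip v₁ v₂ * ip v₃ v₄ + ip v₁ v₃ * ip v₂ v₄ + ip v₁ v₄ * ip v₂ v₃) :=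
  stmt3_general d hd σ hσ u a hint perp hperp ip hip v₁ v₂ v₃ v₄
end

section
/- Let κ > 0 and u ∈ S^{d-1}, and let Q_{M_u} be the d×d matrix Q_{M_u} = ∫_{S^{d-1}} M_u(ω) (ω⊗ω − (1/d)·Id) dσ(ω). Set λ∥ = ∫_{S^{d-1}} M_u(ω)(ω·u)² dσ(ω) − 1/d. Then u is an eigenvector of Q_{M_u} with eigenvalue λ∥ (i.e. Q_{M_u} u = λ∥ u), and every ξ ∈ ℝ^d with ξ·u = 0 is an eigenvector of Q_{M_u} with eigenvalue λ⊥ = −λ∥/(d−1) (i.e. Q_{M_u} ξ = −(λ∥/(d−1)) ξ). -/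
/-!
The density `M_u` depends only on `(ω·u)²`, so the weighted second-moment form
`B(v, w) = ∫ M_u ⟪ω, v⟫ ⟪ω, w⟫ dσ` is invariant under every isometry sending `u` to `±u`.
The reflection in `u^⊥` kills the mixed terms `B(u, p)` with `p ⊥ u`, and the reflections
exchanging two vectors of equal length in `u^⊥` force `B` to be a multiple `β` of the inner
product on `u^⊥`. As `Q = B - Id/d`, the line `ℝ u` and `u^⊥` are eigenspaces of `Q`, and the
trace identity `B(u, u) + (d - 1) β = ∫ M_u dσ = 1` ties the two eigenvalues together.
-/

open MeasureTheory Metric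
open scoped RealInnerProductSpace

section InnerProductSpace

variable {E : Type*} [NormedAddCommGroup E] [InnerProductSpace ℝ E] {u : E}

theorem LinearIsometryEquiv.inner_map_left_sq_of_map_eq_or_neg {e : E ≃ₗᵢ[ℝ] E}
    (he : e u = u ∨ e u = -u) (x : E) : ⟪e x, u⟫ ^ 2 = ⟪x, u⟫ ^ 2 := by
  rcases he with he | he <;> rw [← e.inner_map_map x u, he]
  rw [inner_neg_right, neg_sq]

namespace LinearMap.BilinForm

variable {B : LinearMap.BilinForm ℝ E}

def IsAxiallySymmetric (B : LinearMap.BilinForm ℝ E) (u : E) : Prop :=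
  ∀ e : E ≃ₗᵢ[ℝ] E, (e u = u ∨ e u = -u) → ∀ v w, B (e v) (e w) = B v w

theorem sum_apply_self_of_eq {ι : Type*} [Fintype ι] (b : OrthonormalBasis ι ℝ E)
    (hu : ‖u‖ = 1) {α β : ℝ}
    (hB : ∀ v w, B v w = α * (⟪v, u⟫ * ⟪w, u⟫) + β * (⟪v, w⟫ - ⟪v, u⟫ * ⟪w, u⟫)) :
    ∑ i, B (b i) (b i) = α + β * (Fintype.card ι - 1) := by
  have hsq : ∑ i, ⟪b i, u⟫ * ⟪b i, u⟫ = 1 := by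
    simpa only [real_inner_comm u, real_inner_self_eq_norm_sq, hu, one_pow]
      using b.sum_inner_mul_inner u u
  simp only [hB, real_inner_self_eq_norm_sq, b.orthonormal.1, one_pow, Finset.sum_add_distrib,
    ← Finset.mul_sum, Finset.sum_sub_distrib, hsq, Finset.sum_const, Finset.card_univ,
    nsmul_eq_mul, mul_one]

namespace IsAxiallySymmetric

theorem apply_eq_zero_of_inner_eq_zero (hB : B.IsAxiallySymmetric u) {p : E}
    (hp : ⟪p, u⟫ = 0) : B u p = 0 := by
  have hpmem : p ∈ (ℝ ∙ u)ᗮ :=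
    Submodule.mem_orthogonal_singleton_iff_inner_right.2 ((real_inner_comm _ _).trans hp)
  have h := hB _ (Or.inr (Submodule.reflection_orthogonalComplement_singleton_eq_neg u)) u p
  rw [Submodule.reflection_orthogonalComplement_singleton_eq_neg,
    Submodule.reflection_mem_subspace_eq_self hpmem, map_neg, LinearMap.neg_apply] at h
  linarith

theorem apply_self_eq_of_norm_eq (hB : B.IsAxiallySymmetric u) {p q : E}
    (hp : ⟪p, u⟫ = 0) (hq : ⟪q, u⟫ = 0) (hpq : ‖p‖ = ‖q‖) : B p p = B q q := by
  have hu : u ∈ (ℝ ∙ (p - q))ᗮ := by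
    rw [Submodule.mem_orthogonal_singleton_iff_inner_right, inner_sub_left, hp, hq, sub_zero]
  have h := hB _ (Or.inl (Submodule.reflection_mem_subspace_eq_self hu)) p p
  rw [Submodule.reflection_sub hpq] at h
  exact h.symm

theorem exists_apply_self_eq_mul_inner (hB : B.IsAxiallySymmetric u) :
    ∃ β : ℝ, ∀ p, ⟪p, u⟫ = 0 → B p p = β * ⟪p, p⟫ := by
  by_cases h : ∃ q : E, ⟪q, u⟫ = 0 ∧ ‖q‖ = 1
  · obtain ⟨q, hq, hq1⟩ := h
    refine ⟨B q q, fun p hp => ?_⟩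
    calc B p p = B (‖p‖ • q) (‖p‖ • q) :=
          hB.apply_self_eq_of_norm_eq hp (by rw [real_inner_smul_left, hq, mul_zero])
            (by rw [norm_smul, hq1, norm_norm, mul_one])
      _ = B q q * ⟪p, p⟫ := by
          simp only [map_smul, LinearMap.smul_apply, smul_eq_mul, real_inner_self_eq_norm_sq]
          ring
  · push Not at h
    refine ⟨0, fun p hp => ?_⟩
    obtain rfl : p = 0 := by
      by_contra hp0
      exact h (‖p‖⁻¹ • p) (by rw [real_inner_smul_left, hp, mul_zero]) (norm_smul_inv_norm hp0)
    simp

theorem exists_apply_eq_mul_inner (hB : B.IsAxiallySymmetric u) (hsymm : B.IsSymm) :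
    ∃ β : ℝ, ∀ p q, ⟪p, u⟫ = 0 → ⟪q, u⟫ = 0 → B p q = β * ⟪p, q⟫ := by
  obtain ⟨β, hβ⟩ := hB.exists_apply_self_eq_mul_inner
  refine ⟨β, fun p q hp hq => ?_⟩
  have hpq := hβ (p + q) (by rw [inner_add_left, hp, hq, add_zero])
  simp only [map_add, LinearMap.add_apply, inner_add_left, inner_add_right, hβ p hp, hβ q hq,
    hsymm.eq q p, real_inner_comm p q] at hpq
  linarith

theorem exists_apply_eq (hB : B.IsAxiallySymmetric u) (hsymm : B.IsSymm) (hu : ‖u‖ = 1) :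
    ∃ β : ℝ, ∀ v w, B v w = B u u * (⟪v, u⟫ * ⟪w, u⟫) + β * (⟪v, w⟫ - ⟪v, u⟫ * ⟪w, u⟫) := by
  obtain ⟨β, hβ⟩ := hB.exists_apply_eq_mul_inner hsymm
  refine ⟨β, fun v w => ?_⟩
  have huu : ⟪u, u⟫ = 1 := by rw [real_inner_self_eq_norm_sq, hu, one_pow]
  set p := v - ⟪v, u⟫ • u
  set q := w - ⟪w, u⟫ • u
  have hp : ⟪p, u⟫ = 0 := by rw [inner_sub_left, real_inner_smul_left, huu, mul_one, sub_self]
  have hq : ⟪q, u⟫ = 0 := by rw [inner_sub_left, real_inner_smul_left, huu, mul_one, sub_self]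
  have hpq : ⟪p, q⟫ = ⟪v, w⟫ - ⟪v, u⟫ * ⟪w, u⟫ := by
    simp only [p, q, inner_sub_left, inner_sub_right, real_inner_smul_left, real_inner_smul_right,
      huu, real_inner_comm u]
    ring
  calc B v w = B (⟪v, u⟫ • u + p) (⟪w, u⟫ • u + q) := by simp only [p, q, add_sub_cancel]
    _ = ⟪v, u⟫ * ⟪w, u⟫ * B u u + ⟪v, u⟫ * B u q + ⟪w, u⟫ * B p u + B p q := by
        simp only [map_add, map_smul, LinearMap.add_apply, LinearMap.smul_apply, smul_eq_mul]
        ring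
    _ = _ := by
        rw [hB.apply_eq_zero_of_inner_eq_zero hq, hsymm.eq p u,
          hB.apply_eq_zero_of_inner_eq_zero hp, hβ p q hp hq, hpq]
        ring

theorem apply_right_eq_mul_inner (hB : B.IsAxiallySymmetric u) (hsymm : B.IsSymm)
    (hu : ‖u‖ = 1) (v : E) : B v u = B u u * ⟪v, u⟫ := by
  obtain ⟨β, hβ⟩ := hB.exists_apply_eq hsymm hu
  rw [hβ, real_inner_self_eq_norm_sq, hu]
  ring

theorem apply_right_eq_mul_inner_of_inner_eq_zero {ι : Type*} [Fintype ι]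
    (b : OrthonormalBasis ι ℝ E) (hι : 2 ≤ Fintype.card ι) (hB : B.IsAxiallySymmetric u)
    (hsymm : B.IsSymm) (hu : ‖u‖ = 1) {ξ : E} (hξ : ⟪ξ, u⟫ = 0) (v : E) :
    B v ξ = (∑ i, B (b i) (b i) - B u u) / (Fintype.card ι - 1) * ⟪v, ξ⟫ := by
  obtain ⟨β, hβ⟩ := hB.exists_apply_eq hsymm hu
  have hι' : (Fintype.card ι : ℝ) - 1 ≠ 0 := by
    have : (2 : ℝ) ≤ Fintype.card ι := by exact_mod_cast hι
    linarith
  rw [sum_apply_self_of_eq b hu hβ, hβ, hξ]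
  field_simp
  ring

end IsAxiallySymmetric

end LinearMap.BilinForm

end InnerProductSpace

section SecondMoment

variable {d : ℕ}

local notation "E" => EuclideanSpace ℝ (Fin d)
local notation "𝕊" => sphere (0 : E) 1

variable {σ : Measure (sphere (0 : EuclideanSpace ℝ (Fin d)) 1)} [IsFiniteMeasure σ]

theorem integrable_mul_inner_mul_inner (M : C(𝕊, ℝ)) (v w : E) :
    Integrable (fun ω : 𝕊 => M ω * (⟪(ω : E), v⟫ * ⟪(ω : E), w⟫)) σ :=
  (M.continuous.mul ((continuous_subtype_val.inner continuous_const).mul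
    (continuous_subtype_val.inner continuous_const))).integrable_of_hasCompactSupport
    (.of_compactSpace _)

variable (σ) in
noncomputable def secondMoment (M : C(𝕊, ℝ)) : LinearMap.BilinForm ℝ E :=
  LinearMap.mk₂ ℝ (fun v w => ∫ ω, M ω * (⟪(ω : E), v⟫ * ⟪(ω : E), w⟫) ∂σ)
    (fun v v' w => by
      simp only [inner_add_right, add_mul, mul_add]
      exact integral_add (integrable_mul_inner_mul_inner M v w)
        (integrable_mul_inner_mul_inner M v' w))
    (fun c v w => by
      simp only [real_inner_smul_right, smul_eq_mul, ← integral_const_mul]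
      congr 1 with ω
      ring)
    (fun v w w' => by
      simp only [inner_add_right, mul_add]
      exact integral_add (integrable_mul_inner_mul_inner M v w)
        (integrable_mul_inner_mul_inner M v w'))
    (fun c v w => by
      simp only [real_inner_smul_right, smul_eq_mul, ← integral_const_mul]
      congr 1 with ω
      ring)

@[simp]
theorem secondMoment_apply (M : C(𝕊, ℝ)) (v w : E) :
    secondMoment σ M v w = ∫ ω, M ω * (⟪(ω : E), v⟫ * ⟪(ω : E), w⟫) ∂σ :=
  rfl

variable (σ) in
theorem secondMoment_isSymm (M : C(𝕊, ℝ)) : (secondMoment σ M).IsSymm :=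
  ⟨fun v w => by simp only [secondMoment_apply, mul_comm ⟪_, v⟫]⟩

theorem secondMoment_map_map {e : E ≃ₗᵢ[ℝ] E} (hσ : σ.map (sphereRot e) = σ) {M : C(𝕊, ℝ)}
    (hM : ∀ ω, M (sphereRot e ω) = M ω) (v w : E) :
    secondMoment σ M (e v) (e w) = secondMoment σ M v w := by
  have hrot : Continuous (sphereRot e) :=
    (e.continuous.comp continuous_subtype_val).subtype_mk _
  rw [secondMoment_apply]
  conv_lhs => rw [← hσ]
  rw [integral_map hrot.aemeasurable (hσ ▸ (integrable_mul_inner_mul_inner M (e v) (e w)).1)]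
  simp only [hM]
  simp only [sphereRot, LinearIsometryEquiv.inner_map_map, secondMoment_apply]

theorem sum_secondMoment_apply_self {ι : Type*} [Fintype ι] (b : OrthonormalBasis ι ℝ E)
    (M : C(𝕊, ℝ)) : ∑ i, secondMoment σ M (b i) (b i) = ∫ ω, M ω ∂σ := by
  simp only [secondMoment_apply]
  rw [← integral_finsetSum _ fun i _ => integrable_mul_inner_mul_inner M _ _]
  refine integral_congr_ae (.of_forall fun ω => ?_)
  have hω : ∑ i, ⟪(ω : E), b i⟫ * ⟪(ω : E), b i⟫ = 1 := by
    simpa only [real_inner_comm (ω : E), real_inner_self_eq_norm_sq, norm_eq_of_mem_sphere,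
      one_pow] using b.sum_inner_mul_inner (ω : E) ω
  simp only [← Finset.mul_sum, hω, mul_one]

theorem sum_integral_mul_sub_ite_mul (M : C(𝕊, ℝ)) (c : ℝ) (v : E) (i : Fin d) :
    ∑ j, (∫ ω, M ω * ((ω : E) i * (ω : E) j - if i = j then c else 0) ∂σ) * v j =
      secondMoment σ M (EuclideanSpace.single i 1) v - c * (∫ ω, M ω ∂σ) * v i := by
  have hint : ∀ j, Integrable
      (fun ω : 𝕊 => M ω * ((ω : E) i * (ω : E) j - if i = j then c else 0) * v j) σ := fun j =>
    Continuous.integrable_of_hasCompactSupport (by fun_prop) (.of_compactSpace _)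
  have hM : Integrable M σ := M.continuous.integrable_of_hasCompactSupport (.of_compactSpace _)
  simp only [← integral_mul_const]
  rw [← integral_finsetSum _ fun j _ => hint j, secondMoment_apply,
    show c * (∫ ω, M ω ∂σ) * v i = ∫ ω, M ω * (c * v i) ∂σ by rw [integral_mul_const]; ring,
    ← integral_sub (integrable_mul_inner_mul_inner M _ _) (hM.mul_const _)]
  refine integral_congr_ae (.of_forall fun ω => ?_)
  dsimp only
  rw [EuclideanSpace.inner_single_right, PiLp.inner_apply]
  simp only [one_mul, conj_trivial, RCLike.inner_apply, mul_sub, sub_mul, Finset.sum_sub_distrib,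
    mul_ite, ite_mul, mul_zero, zero_mul, Finset.sum_ite_eq, Finset.mem_univ, if_true,
    Finset.mul_sum]
  congr 1
  · exact Finset.sum_congr rfl fun j _ => by ring
  · ring

end SecondMoment

theorem stmt4_general (d : ℕ) (hd : 2 ≤ d)
    (σ : Measure (sphere (0 : EuclideanSpace ℝ (Fin d)) 1))
    [IsProbabilityMeasure σ]
    (hσ : ∀ e : EuclideanSpace ℝ (Fin d) ≃ₗᵢ[ℝ] EuclideanSpace ℝ (Fin d),
      σ.map (sphereRot e) = σ)
    (κ : ℝ)
    (u : sphere (0 : EuclideanSpace ℝ (Fin d)) 1)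
    (Z : ℝ)
    (hZ : Z = ∫ ω, Real.exp (κ / 2 *
        ⟪(ω : EuclideanSpace ℝ (Fin d)), (u : EuclideanSpace ℝ (Fin d))⟫ ^ 2) ∂σ)
    (M : sphere (0 : EuclideanSpace ℝ (Fin d)) 1 → ℝ)
    (hM : ∀ ω, M ω = Real.exp (κ / 2 *
        ⟪(ω : EuclideanSpace ℝ (Fin d)), (u : EuclideanSpace ℝ (Fin d))⟫ ^ 2) / Z)
    (Q : Matrix (Fin d) (Fin d) ℝ)
    (hQ : ∀ i j, Q i j = ∫ ω, M ω *
        ((ω : EuclideanSpace ℝ (Fin d)) i * (ω : EuclideanSpace ℝ (Fin d)) j -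
          (if i = j then 1 / (d : ℝ) else 0)) ∂σ)
    (lampar : ℝ)
    (hlam : lampar = (∫ ω, M ω *
        ⟪(ω : EuclideanSpace ℝ (Fin d)), (u : EuclideanSpace ℝ (Fin d))⟫ ^ 2 ∂σ) - 1 / (d : ℝ)) :
    (∀ i, (∑ j, Q i j * (u : EuclideanSpace ℝ (Fin d)) j)
        = lampar * (u : EuclideanSpace ℝ (Fin d)) i) ∧
    (∀ ξ : EuclideanSpace ℝ (Fin d), ⟪ξ, (u : EuclideanSpace ℝ (Fin d))⟫ = 0 →
      ∀ i, (∑ j, Q i j * ξ j) = -(lampar / ((d : ℝ) - 1)) * ξ i) := by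
  have hexp : Continuous fun ω : sphere (0 : EuclideanSpace ℝ (Fin d)) 1 =>
      Real.exp (κ / 2 * ⟪(ω : EuclideanSpace ℝ (Fin d)), (u : EuclideanSpace ℝ (Fin d))⟫ ^ 2) := by
    fun_prop
  let M' : C(sphere (0 : EuclideanSpace ℝ (Fin d)) 1, ℝ) :=
    ⟨M, by simpa only [funext hM] using hexp.div_const Z⟩
  have hZ0 : 0 < Z :=
    hZ ▸ integral_exp_pos (hexp.integrable_of_hasCompactSupport (.of_compactSpace _))
  have hmass : ∫ ω, M' ω ∂σ = 1 := by
    simp only [M', ContinuousMap.coe_mk, hM, integral_div, ← hZ, div_self hZ0.ne']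
  have hsymm : (secondMoment σ M').IsAxiallySymmetric u := fun e he =>
    secondMoment_map_map (hσ e) fun ω => by
      simp only [M', ContinuousMap.coe_mk, hM, sphereRot,
        LinearIsometryEquiv.inner_map_left_sq_of_map_eq_or_neg he]
  have hQv : ∀ v i, ∑ j, Q i j * v j =
      secondMoment σ M' (EuclideanSpace.single i 1) v - 1 / d * v i := fun v i => by
    have h := sum_integral_mul_sub_ite_mul (σ := σ) M' (1 / d) v i
    rw [hmass, mul_one] at h
    simp only [hQ]
    exact h
  have hlam' : lampar = secondMoment σ M' u u - 1 / d := by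
    simp only [hlam, secondMoment_apply, M', ContinuousMap.coe_mk, pow_two]
  refine ⟨fun i => ?_, fun ξ hξ i => ?_⟩
  · rw [hQv, hsymm.apply_right_eq_mul_inner (secondMoment_isSymm σ M') (norm_eq_of_mem_sphere u),
      hlam']
    simp only [EuclideanSpace.inner_single_left, map_one, one_mul]
    ring
  · rw [hQv, hsymm.apply_right_eq_mul_inner_of_inner_eq_zero (EuclideanSpace.basisFun (Fin d) ℝ)
      (by rwa [Fintype.card_fin]) (secondMoment_isSymm σ M') (norm_eq_of_mem_sphere u) hξ,
      sum_secondMoment_apply_self, hmass, Fintype.card_fin, hlam']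
    have hd0 : (d : ℝ) ≠ 0 := by positivity
    have hd1 : (d : ℝ) - 1 ≠ 0 := sub_ne_zero.2 (by exact_mod_cast (by omega : d ≠ 1))
    simp only [EuclideanSpace.inner_single_left, map_one, one_mul]
    field_simp
    ring

/-- for the nematic equilibrium `M_u`, the Q-tensor
`Q_{M_u} = ∫ M_u (ω⊗ω − Id/d) dσ` has `u` as eigenvector with eigenvalue
`λ∥ = ∫ M_u (ω·u)² dσ − 1/d`, and every `ξ ⊥ u` as eigenvector with eigenvalue
`λ⊥ = −λ∥/(d−1)`. -/
theorem stmt4 (d : ℕ) (hd : 2 ≤ d)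
    (σ : Measure (sphere (0 : EuclideanSpace ℝ (Fin d)) 1))
    [IsProbabilityMeasure σ]
    (hσ : ∀ e : EuclideanSpace ℝ (Fin d) ≃ₗᵢ[ℝ] EuclideanSpace ℝ (Fin d),
      σ.map (sphereRot e) = σ)
    (κ : ℝ) (hκ : 0 < κ)
    (u : sphere (0 : EuclideanSpace ℝ (Fin d)) 1)
    (Z : ℝ)
    (hZ : Z = ∫ ω, Real.exp (κ / 2 *
        ⟪(ω : EuclideanSpace ℝ (Fin d)), (u : EuclideanSpace ℝ (Fin d))⟫ ^ 2) ∂σ)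
    (M : sphere (0 : EuclideanSpace ℝ (Fin d)) 1 → ℝ)
    (hM : ∀ ω, M ω = Real.exp (κ / 2 *
        ⟪(ω : EuclideanSpace ℝ (Fin d)), (u : EuclideanSpace ℝ (Fin d))⟫ ^ 2) / Z)
    (Q : Matrix (Fin d) (Fin d) ℝ)
    (hQ : ∀ i j, Q i j = ∫ ω, M ω *
        ((ω : EuclideanSpace ℝ (Fin d)) i * (ω : EuclideanSpace ℝ (Fin d)) j -
          (if i = j then 1 / (d : ℝ) else 0)) ∂σ)
    (lampar : ℝ)
    (hlam : lampar = (∫ ω, M ω *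
        ⟪(ω : EuclideanSpace ℝ (Fin d)), (u : EuclideanSpace ℝ (Fin d))⟫ ^ 2 ∂σ) - 1 / (d : ℝ)) :
    (∀ i, (∑ j, Q i j * (u : EuclideanSpace ℝ (Fin d)) j)
        = lampar * (u : EuclideanSpace ℝ (Fin d)) i) ∧
    (∀ ξ : EuclideanSpace ℝ (Fin d), ⟪ξ, (u : EuclideanSpace ℝ (Fin d))⟫ = 0 →
      ∀ i, (∑ j, Q i j * ξ j) = -(lampar / ((d : ℝ) - 1)) * ξ i) :=
  stmt4_general d hd σ hσ κ u Z hZ M hM Q hQ lampar hlam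
end

section
/- For every κ ∈ ℝ and every unit vector u ∈ S^{d-1}, the following integration-by-parts identity holds: (d−1) ∫_{S^{d-1}} exp((κ/2)(ω·u)²) (ω·u)² dσ(ω) = ∫_{S^{d-1}} exp((κ/2)(ω·u)²) (1 − (ω·u)²)(1 + κ(ω·u)²) dσ(ω). -/
/-!
Fix a unit vector `v ⊥ u` and write `a = ⟪ω, u⟫`, `b = ⟪ω, v⟫`, `f t = exp (κ t² / 2) t`.
Rotating the pair `(u, v)` by an angle `θ` inside their plane does not change `∫ f(a) b dσ`,
by the rotation invariance of `σ`; differentiating in `θ` at `0` under the integral sign gives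
`∫ f'(a) b² dσ = ∫ f(a) a dσ`, that is `∫ e^{κa²/2} (1 + κa²) b² dσ = ∫ e^{κa²/2} a² dσ`.
Summing this over the `d - 1` vectors `v` of an orthonormal basis extending `u`, for which
`∑ b² = 1 - a²`, gives the identity.
-/

open MeasureTheory Metric
open scoped RealInnerProductSpace

open Real Set

section PlaneRotation

variable {E : Type*} [NormedAddCommGroup E] [InnerProductSpace ℝ E] {u v : E}

/-- Rotation by `θ` in the plane of the orthonormal pair `u, v`, fixing its orthogonal
complement. -/
noncomputable def planeRotationMap (u v : E) (θ : ℝ) : E →ₗ[ℝ] E where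
  toFun x := x + ((cos θ - 1) * ⟪x, u⟫ - sin θ * ⟪x, v⟫) • u +
    (sin θ * ⟪x, u⟫ + (cos θ - 1) * ⟪x, v⟫) • v
  map_add' x y := by
    simp only [inner_add_left]
    match_scalars <;> ring
  map_smul' r x := by
    simp only [real_inner_smul_left, RingHom.id_apply]
    match_scalars <;> ring

theorem inner_planeRotationMap (hu : ‖u‖ = 1) (hv : ‖v‖ = 1) (huv : ⟪u, v⟫ = 0) (θ : ℝ)
    (x y : E) : ⟪planeRotationMap u v θ x, planeRotationMap u v θ y⟫ = ⟪x, y⟫ := by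
  have huu : ⟪u, u⟫ = 1 := by simp [hu]
  have hvv : ⟪v, v⟫ = 1 := by simp [hv]
  have hvu : ⟪v, u⟫ = 0 := by rw [real_inner_comm, huv]
  simp only [planeRotationMap, LinearMap.coe_mk, AddHom.coe_mk, inner_add_left, inner_add_right,
    real_inner_smul_left, real_inner_smul_right, huu, hvv, huv, hvu]
  rw [real_inner_comm y u, real_inner_comm y v]
  linear_combination (⟪y, u⟫ * ⟪x, u⟫ + ⟪y, v⟫ * ⟪x, v⟫) * sin_sq_add_cos_sq θ

variable [FiniteDimensional ℝ E]

noncomputable def planeRotation (hu : ‖u‖ = 1) (hv : ‖v‖ = 1) (huv : ⟪u, v⟫ = 0) (θ : ℝ) :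
    E ≃ₗᵢ[ℝ] E :=
  ((planeRotationMap u v θ).isometryOfInner
    (inner_planeRotationMap hu hv huv θ)).toLinearIsometryEquiv rfl

theorem planeRotation_apply_left (hu : ‖u‖ = 1) (hv : ‖v‖ = 1) (huv : ⟪u, v⟫ = 0) (θ : ℝ) :
    planeRotation hu hv huv θ u = cos θ • u + sin θ • v := by
  have huu : ⟪u, u⟫ = 1 := by simp [hu]
  simp only [planeRotation, LinearIsometry.toLinearIsometryEquiv_apply,
    LinearMap.coe_isometryOfInner, planeRotationMap, LinearMap.coe_mk, AddHom.coe_mk, huu, huv]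
  match_scalars <;> ring

theorem planeRotation_apply_right (hu : ‖u‖ = 1) (hv : ‖v‖ = 1) (huv : ⟪u, v⟫ = 0) (θ : ℝ) :
    planeRotation hu hv huv θ v = -sin θ • u + cos θ • v := by
  have hvv : ⟪v, v⟫ = 1 := by simp [hv]
  have hvu : ⟪v, u⟫ = 0 := by rw [real_inner_comm, huv]
  simp only [planeRotation, LinearIsometry.toLinearIsometryEquiv_apply,
    LinearMap.coe_isometryOfInner, planeRotationMap, LinearMap.coe_mk, AddHom.coe_mk, hvv, hvu]
  match_scalars <;> ring

end PlaneRotation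

theorem hasDerivAt_comp_rotate_mul {f f' : ℝ → ℝ} (hf : ∀ t, HasDerivAt f (f' t) t) (a b θ : ℝ) :
    HasDerivAt (fun φ ↦ f (cos φ * a + sin φ * b) * (-sin φ * a + cos φ * b))
      (f' (cos θ * a + sin θ * b) * (-sin θ * a + cos θ * b) ^ 2 -
        f (cos θ * a + sin θ * b) * (cos θ * a + sin θ * b)) θ := by
  have hA : HasDerivAt (fun φ ↦ cos φ * a + sin φ * b) (-sin θ * a + cos θ * b) θ :=
    ((hasDerivAt_cos θ).mul_const a).add ((hasDerivAt_sin θ).mul_const b)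
  have hB : HasDerivAt (fun φ ↦ -sin φ * a + cos φ * b) (-(cos θ * a + sin θ * b)) θ :=
    (((hasDerivAt_sin θ).neg.mul_const a).add ((hasDerivAt_cos θ).mul_const b)).congr_deriv
      (by ring)
  exact (((hf _).comp θ hA).mul hB).congr_deriv (by simp only [Function.comp_apply]; ring)

theorem integral_deriv_mul_sq_eq_of_rotate_invariant {α : Type*} [TopologicalSpace α]
    [CompactSpace α] [MeasurableSpace α] [OpensMeasurableSpace α] (μ : Measure α)
    [IsFiniteMeasure μ] {f f' : ℝ → ℝ} (hf : ∀ t, HasDerivAt f (f' t) t) (hf' : Continuous f')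
    {a b : α → ℝ} (ha : Continuous a) (hb : Continuous b)
    (hinv : ∀ θ, ∫ x, f (cos θ * a x + sin θ * b x) * (-sin θ * a x + cos θ * b x) ∂μ =
      ∫ x, f (a x) * b x ∂μ) :
    ∫ x, f' (a x) * b x ^ 2 ∂μ = ∫ x, f (a x) * a x ∂μ := by
  have hfc : Continuous f := continuous_iff_continuousAt.2 fun t ↦ (hf t).continuousAt
  have integrable {g : α → ℝ} (hg : Continuous g) : Integrable g μ :=
    hg.integrable_of_hasCompactSupport (HasCompactSupport.of_compactSpace g)
  set F' : ℝ → α → ℝ := fun θ x ↦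
    f' (cos θ * a x + sin θ * b x) * (-sin θ * a x + cos θ * b x) ^ 2 -
      f (cos θ * a x + sin θ * b x) * (cos θ * a x + sin θ * b x)
  obtain ⟨C, hC⟩ : ∃ C, ∀ p ∈ closedBall (0 : ℝ) 1 ×ˢ (univ : Set α), ‖F' p.1 p.2‖ ≤ C :=
    (isCompact_closedBall 0 1).prod isCompact_univ |>.exists_bound_of_continuousOn
      (by fun_prop)
  have hderiv := (hasDerivAt_integral_of_dominated_loc_of_deriv_le (F' := F')
    (closedBall_mem_nhds 0 one_pos)
    (.of_forall fun θ ↦ (by fun_prop : Continuous _).aestronglyMeasurable)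
    (integrable (by fun_prop)) (by fun_prop : Continuous (F' 0)).aestronglyMeasurable
    (.of_forall fun x θ hθ ↦ hC (θ, x) ⟨hθ, mem_univ x⟩) (integrable_const C)
    (.of_forall fun x θ _ ↦ hasDerivAt_comp_rotate_mul hf (a x) (b x) θ)).2
  rw [funext hinv] at hderiv
  have hzero := hderiv.unique (hasDerivAt_const _ _)
  simp only [F', cos_zero, sin_zero, one_mul, zero_mul, add_zero, neg_zero, zero_add] at hzero
  rw [integral_sub (integrable (by fun_prop)) (integrable (by fun_prop))] at hzero
  exact sub_eq_zero.1 hzero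

theorem hasDerivAt_exp_half_mul_sq_mul (κ t : ℝ) :
    HasDerivAt (fun t ↦ exp (κ / 2 * t ^ 2) * t) (exp (κ / 2 * t ^ 2) * (1 + κ * t ^ 2)) t := by
  have h := ((hasDerivAt_pow 2 t).const_mul (κ / 2)).exp.mul (hasDerivAt_id t)
  exact h.congr_deriv (by simp only [id]; ring)

section Sphere

variable {d : ℕ} {σ : Measure (sphere (0 : EuclideanSpace ℝ (Fin d)) 1)}

theorem integral_comp_sphereRot_s6 {e : EuclideanSpace ℝ (Fin d) ≃ₗᵢ[ℝ] EuclideanSpace ℝ (Fin d)}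
    (he : σ.map (sphereRot e) = σ) {F : sphere (0 : EuclideanSpace ℝ (Fin d)) 1 → ℝ}
    (hF : AEStronglyMeasurable F σ) :
    ∫ ω, F (sphereRot e ω) ∂σ = ∫ ω, F ω ∂σ := by
  have hmeas : Measurable (sphereRot e) :=
    (e.continuous.comp continuous_subtype_val).subtype_mk _ |>.measurable
  rw [← integral_map hmeas.aemeasurable (he.symm ▸ hF), he]

theorem inner_sphereRot_symm (e : EuclideanSpace ℝ (Fin d) ≃ₗᵢ[ℝ] EuclideanSpace ℝ (Fin d))
    (ω : sphere (0 : EuclideanSpace ℝ (Fin d)) 1) (w : EuclideanSpace ℝ (Fin d)) :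
    ⟪(sphereRot e.symm ω : EuclideanSpace ℝ (Fin d)), w⟫ =
      ⟪(ω : EuclideanSpace ℝ (Fin d)), e w⟫ := by
  rw [sphereRot, LinearIsometryEquiv.inner_map_eq_flip, e.symm_symm]

theorem integral_deriv_inner_mul_inner_sq [IsFiniteMeasure σ]
    (hσ : ∀ e, σ.map (sphereRot e) = σ) {f f' : ℝ → ℝ} (hf : ∀ t, HasDerivAt f (f' t) t)
    (hf' : Continuous f') {u v : EuclideanSpace ℝ (Fin d)} (hu : ‖u‖ = 1) (hv : ‖v‖ = 1)
    (huv : ⟪u, v⟫ = 0) :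
    ∫ ω, f' ⟪(ω : EuclideanSpace ℝ (Fin d)), u⟫ * ⟪(ω : EuclideanSpace ℝ (Fin d)), v⟫ ^ 2 ∂σ =
      ∫ ω, f ⟪(ω : EuclideanSpace ℝ (Fin d)), u⟫ * ⟪(ω : EuclideanSpace ℝ (Fin d)), u⟫ ∂σ := by
  have hfc : Continuous f := continuous_iff_continuousAt.2 fun t ↦ (hf t).continuousAt
  refine integral_deriv_mul_sq_eq_of_rotate_invariant σ hf hf' (by fun_prop) (by fun_prop)
    fun θ ↦ ?_
  have hF : Continuous fun ω : sphere (0 : EuclideanSpace ℝ (Fin d)) 1 ↦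
      f ⟪(ω : EuclideanSpace ℝ (Fin d)), u⟫ * ⟪(ω : EuclideanSpace ℝ (Fin d)), v⟫ := by fun_prop
  rw [← integral_comp_sphereRot_s6 (hσ (planeRotation hu hv huv θ).symm) hF.aestronglyMeasurable]
  simp only [inner_sphereRot_symm, planeRotation_apply_left, planeRotation_apply_right,
    inner_add_right, real_inner_smul_right]

end Sphere

theorem OrthonormalBasis.sum_erase_inner_sq {ι E : Type*} [Fintype ι] [DecidableEq ι]
    [NormedAddCommGroup E] [InnerProductSpace ℝ E] (b : OrthonormalBasis ι ℝ E) (i : ι) (x : E) :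
    ∑ j ∈ Finset.univ.erase i, ⟪x, b j⟫ ^ 2 = ‖x‖ ^ 2 - ⟪x, b i⟫ ^ 2 := by
  rw [Finset.sum_erase_eq_sub (Finset.mem_univ i), b.sum_sq_inner_left]

theorem stmt6_general (d : ℕ)
    (σ : Measure (sphere (0 : EuclideanSpace ℝ (Fin d)) 1))
    [IsProbabilityMeasure σ]
    (hσ : ∀ e : EuclideanSpace ℝ (Fin d) ≃ₗᵢ[ℝ] EuclideanSpace ℝ (Fin d),
      σ.map (sphereRot e) = σ)
    (κ : ℝ) (u : sphere (0 : EuclideanSpace ℝ (Fin d)) 1) :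
    ((d : ℝ) - 1) * ∫ ω, Real.exp (κ / 2 *
        ⟪(ω : EuclideanSpace ℝ (Fin d)), (u : EuclideanSpace ℝ (Fin d))⟫ ^ 2) *
        ⟪(ω : EuclideanSpace ℝ (Fin d)), (u : EuclideanSpace ℝ (Fin d))⟫ ^ 2 ∂σ
      = ∫ ω, Real.exp (κ / 2 *
          ⟪(ω : EuclideanSpace ℝ (Fin d)), (u : EuclideanSpace ℝ (Fin d))⟫ ^ 2) *
          ((1 - ⟪(ω : EuclideanSpace ℝ (Fin d)), (u : EuclideanSpace ℝ (Fin d))⟫ ^ 2) *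
            (1 + κ * ⟪(ω : EuclideanSpace ℝ (Fin d)), (u : EuclideanSpace ℝ (Fin d))⟫ ^ 2)) ∂σ := by
  classical
  have hu : ‖(u : EuclideanSpace ℝ (Fin d))‖ = 1 := norm_eq_of_mem_sphere u
  have horth : Orthonormal ℝ
      (Subtype.val : ({(u : EuclideanSpace ℝ (Fin d))} : Set (EuclideanSpace ℝ (Fin d))) → _) :=
    orthonormal_subsingleton_iff.2 fun w ↦ by rw [Set.mem_singleton_iff.1 w.2, hu]
  obtain ⟨s, b, hus, hb⟩ := horth.exists_orthonormalBasis_extension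
  set i : s := ⟨u, hus rfl⟩
  have hbi : b i = u := by rw [hb]
  have hcard : ((Finset.univ.erase i).card : ℝ) = d - 1 := by
    rw [Finset.cast_card_erase_of_mem (Finset.mem_univ i), Finset.card_univ,
      ← Module.finrank_eq_card_basis b.toBasis, finrank_euclideanSpace_fin]
  have key : ∀ j ∈ Finset.univ.erase i,
      ∫ ω, Real.exp (κ / 2 *
          ⟪(ω : EuclideanSpace ℝ (Fin d)), (u : EuclideanSpace ℝ (Fin d))⟫ ^ 2) *
          (1 + κ * ⟪(ω : EuclideanSpace ℝ (Fin d)), (u : EuclideanSpace ℝ (Fin d))⟫ ^ 2) *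
          ⟪(ω : EuclideanSpace ℝ (Fin d)), b j⟫ ^ 2 ∂σ =
        ∫ ω, Real.exp (κ / 2 *
          ⟪(ω : EuclideanSpace ℝ (Fin d)), (u : EuclideanSpace ℝ (Fin d))⟫ ^ 2) *
          ⟪(ω : EuclideanSpace ℝ (Fin d)), (u : EuclideanSpace ℝ (Fin d))⟫ ^ 2 ∂σ := by
    intro j hj
    simpa only [mul_assoc, ← pow_two] using integral_deriv_inner_mul_inner_sq hσ
      (hasDerivAt_exp_half_mul_sq_mul κ) (by fun_prop) hu (b.orthonormal.1 j)
      (hbi ▸ b.orthonormal.2 (Finset.ne_of_mem_erase hj).symm)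
  rw [← hcard, ← nsmul_eq_mul, ← Finset.sum_const, ← Finset.sum_congr rfl key,
    ← integral_finsetSum _ fun j _ ↦ ?_]
  · refine integral_congr_ae (.of_forall fun ω ↦ ?_)
    simp only [← Finset.mul_sum, b.sum_erase_inner_sq, hbi, norm_eq_of_mem_sphere]
    ring
  · exact (by fun_prop : Continuous _).integrable_of_hasCompactSupport (.of_compactSpace _)

/-- the integration-by-parts identity on the sphere:
`(d−1) ∫ e^{(κ/2)(ω·u)²} (ω·u)² dσ = ∫ e^{(κ/2)(ω·u)²} (1 − (ω·u)²)(1 + κ(ω·u)²) dσ`. -/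
theorem stmt6 (d : ℕ) (hd : 2 ≤ d)
    (σ : Measure (sphere (0 : EuclideanSpace ℝ (Fin d)) 1))
    [IsProbabilityMeasure σ]
    (hσ : ∀ e : EuclideanSpace ℝ (Fin d) ≃ₗᵢ[ℝ] EuclideanSpace ℝ (Fin d),
      σ.map (sphereRot e) = σ)
    (κ : ℝ) (u : sphere (0 : EuclideanSpace ℝ (Fin d)) 1) :
    ((d : ℝ) - 1) * ∫ ω, Real.exp (κ / 2 *
        ⟪(ω : EuclideanSpace ℝ (Fin d)), (u : EuclideanSpace ℝ (Fin d))⟫ ^ 2) *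
        ⟪(ω : EuclideanSpace ℝ (Fin d)), (u : EuclideanSpace ℝ (Fin d))⟫ ^ 2 ∂σ
      = ∫ ω, Real.exp (κ / 2 *
          ⟪(ω : EuclideanSpace ℝ (Fin d)), (u : EuclideanSpace ℝ (Fin d))⟫ ^ 2) *
          ((1 - ⟪(ω : EuclideanSpace ℝ (Fin d)), (u : EuclideanSpace ℝ (Fin d))⟫ ^ 2) *
            (1 + κ * ⟪(ω : EuclideanSpace ℝ (Fin d)), (u : EuclideanSpace ℝ (Fin d))⟫ ^ 2)) ∂σ :=
  stmt6_general d σ hσ κ u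
end

section
/- Let u : ℝ^d → ℝ^d be twice differentiable with |u(x)| = 1 for all x, and let x ∈ ℝ^d. Write P = P_{u(x)⊥} with entries P_{ij} = δ_{ij} − u_i u_j (as a function of x) and Σ_{ijkl} = P_{ij}P_{kl} + P_{ik}P_{jl} + P_{il}P_{jk}. Then for every l ∈ {1,…,d}: Σ_{i,j,k} Σ_{ijkl}(x) (∂_{x_i}∂_{x_j} u_k)(x) = Σ_{i,j,k} P_{lk} ∂_{x_i}(P_{ij} ∂_{x_j} u_k) + (∇·u) Σ_i u_i ∂_{x_i} u_l + Σ_{i,j} (u_j ∂_{x_j} u_i)(∂_{x_i} u_l) + 2 Σ_j P_{lj} ∂_{x_j}(∇·u) + 2 Σ_{j,k} P_{lj} (∂_{x_j} u_k)(Σ_i u_i ∂_{x_i} u_k), where all functions and derivatives are evaluated at x. (This is the identity Σ : ∇²u = P_{u⊥}(∇·(P_{u⊥}∇u)) + (∇·u)(u·∇)u + (((u·∇)u)·P_{u⊥}∇)u + 2P_{u⊥}∇(∇·u) + 2(P_{u⊥}∇u)((u·∇)u).) -/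
/-!
Differentiating `|u|² = 1` once and twice gives `u · ∂ᵢu = 0` and
`u · ∂ᵢ∂ⱼu = -∂ᵢu · ∂ⱼu`. The first says that `P = P_{u⊥}` fixes every `∂ᵢu`; the second
evaluates the `P`-trace of the Hessian, `Σⱼₖ Pⱼₖ ∂ᵢ∂ⱼuₖ = ∂ᵢ(∇·u) + ∂ᵢu · (u·∇)u`.
After the product rule on the right-hand side and the symmetry of `∇²u`, the identity is a
purely algebraic consequence of these two relations.
-/

open Finset
open scoped RealInnerProductSpace

section OrthoProj

variable {ι : Type*} [Fintype ι] [DecidableEq ι]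

def orthoProj (a : ι → ℝ) (i j : ι) : ℝ := (if i = j then 1 else 0) - a i * a j

omit [Fintype ι] in
lemma orthoProj_comm (a : ι → ℝ) (i j : ι) : orthoProj a i j = orthoProj a j i := by
  simp only [orthoProj, eq_comm (a := i), mul_comm (a i)]

lemma sum_orthoProj_mul (a f : ι → ℝ) (m : ι) :
    ∑ k, orthoProj a m k * f k = f m - a m * ∑ k, a k * f k := by
  simp only [orthoProj, sub_mul, ite_mul, one_mul, zero_mul, sum_sub_distrib, sum_ite_eq,
    mem_univ, if_true, mul_sum, mul_assoc]

variable (a : ι → ℝ) (D : ι → ι → ℝ) (S : ι → ι → ι → ℝ)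

lemma sum_sum_orthoProj_mul (haS : ∀ i j, ∑ k, a k * S i j k = -∑ k, D i k * D j k) (i : ι) :
    ∑ j, ∑ k, orthoProj a j k * S i j k = ∑ j, S i j j + ∑ j, a j * ∑ k, D i k * D j k := by
  simp only [sum_orthoProj_mul, haS, mul_neg, sub_neg_eq_add, sum_add_distrib]

lemma sum_orthoProj_mul_derivOrthoProj_mul (haD : ∀ i, ∑ k, a k * D i k = 0) (l : ι) :
    ∑ i, ∑ j, ∑ k, orthoProj a l k * (-(D i i * a j + a i * D i j) * D j k)
      = -((∑ i, D i i) * ∑ i, a i * D i l) - ∑ i, (∑ j, a j * D j i) * D i l := by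
  have hrow : ∀ i j, ∑ k, orthoProj a l k * (-(D i i * a j + a i * D i j) * D j k)
      = -(D i i * a j * D j l) - a i * D i j * D j l := by
    intro i j
    calc ∑ k, orthoProj a l k * (-(D i i * a j + a i * D i j) * D j k)
        = -(D i i * a j + a i * D i j) * ∑ k, orthoProj a l k * D j k := by
          rw [mul_sum]
          exact sum_congr rfl fun k _ => by ring
      _ = _ := by
          rw [sum_orthoProj_mul, haD]
          ring
  simp only [hrow, sum_sub_distrib, sum_neg_distrib, sum_mul, mul_sum, mul_assoc]
  rw [sum_comm (f := fun i j => D i i * (a j * D j l)),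
    sum_comm (f := fun i j => a j * (D j i * D i l))]

/-- `D i j` and `S i j k` stand for `∂ᵢaⱼ` and `∂ᵢ∂ⱼaₖ`, so that
`-(D i i * a j + a i * D i j)` is `∂ᵢPᵢⱼ`. -/
theorem sum_sigma_mul_eq (hsym : ∀ i j k, S i j k = S j i k)
    (haD : ∀ i, ∑ k, a k * D i k = 0)
    (haS : ∀ i j, ∑ k, a k * S i j k = -∑ k, D i k * D j k) (l : ι) :
    ∑ i, ∑ j, ∑ k, (orthoProj a i j * orthoProj a k l + orthoProj a i k * orthoProj a j l
        + orthoProj a i l * orthoProj a j k) * S i j k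
      = ∑ i, ∑ j, ∑ k, orthoProj a l k *
            (-(D i i * a j + a i * D i j) * D j k + orthoProj a i j * S i j k)
        + (∑ i, D i i) * (∑ i, a i * D i l)
        + ∑ i, (∑ j, a j * D j i) * D i l
        + 2 * ∑ j, orthoProj a l j * ∑ i, S j i i
        + 2 * ∑ j, ∑ k, orthoProj a l j * D j k * ∑ i, a i * D i k := by
  have hT1 : ∑ i, ∑ j, ∑ k, orthoProj a i j * orthoProj a k l * S i j k
      = ∑ i, ∑ j, ∑ k, orthoProj a l k * (orthoProj a i j * S i j k) :=
    sum_congr rfl fun i _ => sum_congr rfl fun j _ => sum_congr rfl fun k _ => by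
      rw [orthoProj_comm a k l]; ring
  have hT2 : ∑ i, ∑ j, ∑ k, orthoProj a i k * orthoProj a j l * S i j k
      = ∑ i, ∑ j, ∑ k, orthoProj a i l * orthoProj a j k * S i j k := by
    rw [sum_comm]
    exact sum_congr rfl fun i _ => sum_congr rfl fun j _ => sum_congr rfl fun k _ => by
      rw [hsym]; ring
  have hT3 : ∑ i, ∑ j, ∑ k, orthoProj a i l * orthoProj a j k * S i j k
      = ∑ i, orthoProj a i l * (∑ j, S i j j + ∑ j, a j * ∑ k, D i k * D j k) := by
    simp only [mul_assoc, ← mul_sum, sum_sum_orthoProj_mul a D S haS]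
  have hdiv : ∑ j, orthoProj a l j * ∑ i, S j i i = ∑ i, orthoProj a i l * ∑ j, S i j j :=
    sum_congr rfl fun j _ => by rw [orthoProj_comm]
  have hconv : ∑ j, ∑ k, orthoProj a l j * D j k * ∑ i, a i * D i k
      = ∑ i, orthoProj a i l * ∑ j, a j * ∑ k, D i k * D j k := by
    refine sum_congr rfl fun j _ => ?_
    rw [orthoProj_comm a l j]
    simp only [mul_sum, mul_assoc]
    rw [sum_comm]
    exact sum_congr rfl fun i _ => sum_congr rfl fun k _ => by ring
  simp only [add_mul, mul_add, sum_add_distrib]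
  rw [hT1, hT2, hT3, sum_orthoProj_mul_derivOrthoProj_mul a D haD, hdiv, hconv]
  simp only [mul_add, sum_add_distrib]
  ring

end OrthoProj

lemma fderiv_clm_apply_const_apply {𝕜 E F G : Type*} [NontriviallyNormedField 𝕜]
    [NormedAddCommGroup E] [NormedSpace 𝕜 E] [NormedAddCommGroup F] [NormedSpace 𝕜 F]
    [NormedAddCommGroup G] [NormedSpace 𝕜 G] {c : E → F →L[𝕜] G} {x : E}
    (hc : DifferentiableAt 𝕜 c x) (v : F) (w : E) :
    fderiv 𝕜 (fun y => c y v) x w = fderiv 𝕜 c x w v := by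
  simp [fderiv_clm_apply hc (differentiableAt_const v)]

section Euclidean

variable {ι E : Type*} [Fintype ι] [NormedAddCommGroup E] [NormedSpace ℝ E]
  {u : E → EuclideanSpace ℝ ι} {x : E}

lemma fderiv_euclidean_apply (hu : DifferentiableAt ℝ u x) (i : ι) (v : E) :
    fderiv ℝ (fun y => u y i) x v = fderiv ℝ u x v i := by
  have h : HasFDerivAt (fun y => u y i) ((EuclideanSpace.proj (𝕜 := ℝ) i).comp (fderiv ℝ u x)) x :=
    (EuclideanSpace.proj (𝕜 := ℝ) i).hasFDerivAt.comp x hu.hasFDerivAt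
  rw [h.fderiv]
  rfl

lemma fderiv_fderiv_euclidean_apply (hu2 : DifferentiableAt ℝ (fderiv ℝ u) x) (k : ι)
    (v w : E) : fderiv ℝ (fun y => fderiv ℝ u y v k) x w = fderiv ℝ (fderiv ℝ u) x w v k := by
  rw [fderiv_euclidean_apply (hu2.clm_apply (differentiableAt_const v)),
    fderiv_clm_apply_const_apply hu2]

lemma fderiv_sum_fderiv_apply_self (hu2 : DifferentiableAt ℝ (fderiv ℝ u) x) (e : ι → E)
    (w : E) :
    fderiv ℝ (fun y => ∑ i, fderiv ℝ u y (e i) i) x w = ∑ i, fderiv ℝ (fderiv ℝ u) x w (e i) i := by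
  rw [fderiv_fun_sum fun i _ => differentiableAt_euclidean.1
    (hu2.clm_apply (differentiableAt_const (e i))) i]
  simp only [FunLike.coe_sum, Finset.sum_apply, fderiv_fderiv_euclidean_apply hu2]

variable [DecidableEq ι]

lemma fderiv_orthoProj_apply (hu : DifferentiableAt ℝ u x) (i j : ι) (v : E) :
    fderiv ℝ (fun y => orthoProj (u y) i j) x v
      = -(fderiv ℝ u x v i * u x j + u x i * fderiv ℝ u x v j) := by
  have hi := differentiableAt_euclidean.1 hu i
  have hj := differentiableAt_euclidean.1 hu j
  simp only [orthoProj]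
  rw [fderiv_const_sub, fderiv_fun_mul hi hj]
  simp only [neg_apply, add_apply, smul_apply, smul_eq_mul, fderiv_euclidean_apply hu]
  ring

lemma fderiv_orthoProj_mul_fderiv_apply (hu : Differentiable ℝ u)
    (hu2 : DifferentiableAt ℝ (fderiv ℝ u) x) (i j k : ι) (v w : E) :
    fderiv ℝ (fun y => orthoProj (u y) i j * fderiv ℝ u y v k) x w
      = -(fderiv ℝ u x w i * u x j + u x i * fderiv ℝ u x w j) * fderiv ℝ u x v k
        + orthoProj (u x) i j * fderiv ℝ (fderiv ℝ u) x w v k := by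
  have hP : DifferentiableAt ℝ (fun y => orthoProj (u y) i j) x := by
    simp only [orthoProj]
    exact (differentiableAt_const _).sub
      ((differentiableAt_euclidean.1 (hu x) i).mul (differentiableAt_euclidean.1 (hu x) j))
  have hDu := differentiableAt_euclidean.1 (hu2.clm_apply (differentiableAt_const v)) k
  rw [fderiv_fun_mul hP hDu]
  simp only [add_apply, smul_apply, smul_eq_mul, fderiv_orthoProj_apply (hu x),
    fderiv_fderiv_euclidean_apply hu2]
  ring

end Euclidean

section ConstantNorm

variable {E F : Type*} [NormedAddCommGroup E] [NormedSpace ℝ E]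
  [NormedAddCommGroup F] [InnerProductSpace ℝ F] {u : E → F} {c : ℝ} {x : E}

lemma inner_fderiv_eq_zero_of_norm_eq (hu : DifferentiableAt ℝ u x) (hc : ∀ y, ‖u y‖ = c)
    (v : E) : ⟪u x, fderiv ℝ u x v⟫ = 0 := by
  have hconst : (fun y => ⟪u y, u y⟫) = fun _ => c ^ 2 := by
    funext y
    rw [real_inner_self_eq_norm_sq, hc]
  have h := fderiv_inner_apply ℝ hu hu v
  rw [hconst, fderiv_const_apply, zero_apply, real_inner_comm (u x) (fderiv ℝ u x v)] at h
  linarith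

lemma inner_fderiv_add_inner_fderiv_fderiv_eq_zero (hu : Differentiable ℝ u)
    (hu2 : DifferentiableAt ℝ (fderiv ℝ u) x) (hc : ∀ y, ‖u y‖ = c) (v w : E) :
    ⟪fderiv ℝ u x w, fderiv ℝ u x v⟫ + ⟪u x, fderiv ℝ (fderiv ℝ u) x w v⟫ = 0 := by
  have hzero : (fun y => ⟪u y, fderiv ℝ u y v⟫) = fun _ => 0 :=
    funext fun y => inner_fderiv_eq_zero_of_norm_eq (hu y) hc v
  have h := fderiv_inner_apply ℝ (hu x) (hu2.clm_apply (differentiableAt_const v)) w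
  rw [hzero, fderiv_const_apply, zero_apply, fderiv_clm_apply_const_apply hu2] at h
  linarith

end ConstantNorm

theorem stmt16_general (d : ℕ)
    (u : EuclideanSpace ℝ (Fin d) → EuclideanSpace ℝ (Fin d))
    (hu : Differentiable ℝ u) (hu2 : Differentiable ℝ (fderiv ℝ u))
    (hnorm : ∀ x, ‖u x‖ = 1)
    (x : EuclideanSpace ℝ (Fin d))
    (Pf : EuclideanSpace ℝ (Fin d) → Fin d → Fin d → ℝ)
    (hPf : ∀ y i j, Pf y i j = (if i = j then (1 : ℝ) else 0) - u y i * u y j)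
    (D : Fin d → Fin d → ℝ)
    (hD : ∀ i j, D i j = fderiv ℝ u x (EuclideanSpace.single i (1 : ℝ)) j)
    (S : Fin d → Fin d → Fin d → ℝ)
    (hS : ∀ i j k, S i j k =
      fderiv ℝ (fderiv ℝ u) x (EuclideanSpace.single i (1 : ℝ))
        (EuclideanSpace.single j (1 : ℝ)) k) :
    ∀ l, (∑ i, ∑ j, ∑ k,
        (Pf x i j * Pf x k l + Pf x i k * Pf x j l + Pf x i l * Pf x j k) * S i j k)
      = (∑ i, ∑ j, ∑ k, Pf x l k *
            fderiv ℝ (fun y => Pf y i j *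
              fderiv ℝ u y (EuclideanSpace.single j (1 : ℝ)) k) x
              (EuclideanSpace.single i (1 : ℝ)))
        + (∑ i, D i i) * (∑ i, u x i * D i l)
        + (∑ i, (∑ j, u x j * D j i) * D i l)
        + 2 * (∑ j, Pf x l j *
            fderiv ℝ (fun y => ∑ i,
              fderiv ℝ u y (EuclideanSpace.single i (1 : ℝ)) i) x
              (EuclideanSpace.single j (1 : ℝ)))
        + 2 * (∑ j, ∑ k, Pf x l j * D j k * (∑ i, u x i * D i k)) := by
  intro l
  obtain rfl : Pf = fun y => orthoProj (u y) := funext fun y => funext₂ (hPf y)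
  have hsym : ∀ i j k, S i j k = S j i k := fun i j k => by
    rw [hS, hS, second_derivative_symmetric (fun y => (hu y).hasFDerivAt) (hu2 x).hasFDerivAt]
  have haD : ∀ i, ∑ k, u x k * D i k = 0 := fun i => by
    simpa only [hD, PiLp.inner_apply, Real.inner_apply] using
      inner_fderiv_eq_zero_of_norm_eq (hu x) hnorm (EuclideanSpace.single i 1)
  have haS : ∀ i j, ∑ k, u x k * S i j k = -∑ k, D i k * D j k := fun i j => by
    have h := inner_fderiv_add_inner_fderiv_fderiv_eq_zero hu (hu2 x) hnorm
      (EuclideanSpace.single j 1) (EuclideanSpace.single i 1)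
    simp only [PiLp.inner_apply, Real.inner_apply, ← hD, ← hS] at h
    linarith
  simp only [fderiv_orthoProj_mul_fderiv_apply hu (hu2 x), fderiv_sum_fderiv_apply_self (hu2 x),
    ← hD, ← hS]
  exact sum_sigma_mul_eq _ D S hsym haD haS l

/-- the identity
`Σ : ∇²u = P_{u⊥}(∇·(P_{u⊥}∇u)) + (∇·u)(u·∇)u + (((u·∇)u)·P_{u⊥}∇)u + 2P_{u⊥}∇(∇·u)
  + 2(P_{u⊥}∇u)((u·∇)u)`
for a twice differentiable unit vector field `u`, written componentwise. Here
`Pf y i j = δ_{ij} − u_i(y)u_j(y)`, `D i j = ∂_{x_i}u_j(x)`,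
`S i j k = ∂_{x_i}∂_{x_j}u_k(x)` and `Σ_{ijkl} = P_{ij}P_{kl} + P_{ik}P_{jl} + P_{il}P_{jk}`
(all evaluated at `x`). -/
theorem stmt16 (d : ℕ) (hd : 2 ≤ d)
    (u : EuclideanSpace ℝ (Fin d) → EuclideanSpace ℝ (Fin d))
    (hu : Differentiable ℝ u) (hu2 : Differentiable ℝ (fderiv ℝ u))
    (hnorm : ∀ x, ‖u x‖ = 1)
    (x : EuclideanSpace ℝ (Fin d))
    (Pf : EuclideanSpace ℝ (Fin d) → Fin d → Fin d → ℝ)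
    (hPf : ∀ y i j, Pf y i j = (if i = j then (1 : ℝ) else 0) - u y i * u y j)
    (D : Fin d → Fin d → ℝ)
    (hD : ∀ i j, D i j = fderiv ℝ u x (EuclideanSpace.single i (1 : ℝ)) j)
    (S : Fin d → Fin d → Fin d → ℝ)
    (hS : ∀ i j k, S i j k =
      fderiv ℝ (fderiv ℝ u) x (EuclideanSpace.single i (1 : ℝ))
        (EuclideanSpace.single j (1 : ℝ)) k) :
    ∀ l, (∑ i, ∑ j, ∑ k,
        (Pf x i j * Pf x k l + Pf x i k * Pf x j l + Pf x i l * Pf x j k) * S i j k)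
      = (∑ i, ∑ j, ∑ k, Pf x l k *
            fderiv ℝ (fun y => Pf y i j *
              fderiv ℝ u y (EuclideanSpace.single j (1 : ℝ)) k) x
              (EuclideanSpace.single i (1 : ℝ)))
        + (∑ i, D i i) * (∑ i, u x i * D i l)
        + (∑ i, (∑ j, u x j * D j i) * D i l)
        + 2 * (∑ j, Pf x l j *
            fderiv ℝ (fun y => ∑ i,
              fderiv ℝ u y (EuclideanSpace.single i (1 : ℝ)) i) x
              (EuclideanSpace.single j (1 : ℝ)))
        + 2 * (∑ j, ∑ k, Pf x l j * D j k * (∑ i, u x i * D i k)) :=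
  stmt16_general d u hu hu2 hnorm x Pf hPf D hD S hS
end

section
/- Let u : ℝ^d → ℝ^d be twice differentiable with |u(x)| = 1 for all x, and write P_{ij} = δ_{ij} − u_i u_j (a function of x). Then for every i ∈ {1,…,d} and every x: Σ_{j,p,l} P_{jp} ∂_{x_p}(P_{jl} ∂_{x_l} u_i) = Σ_{j,k,l} P_{ij} ∂_{x_k}(P_{kl} ∂_{x_l} u_j) + Σ_{p,j} (u_p ∂_{x_p} u_j)(∂_{x_j} u_i) − u_i Σ_{p,l,s} P_{pl} (∂_{x_l} u_s)(∂_{x_p} u_s). (This is the identity Tr_{[12]}((P_{u⊥}∇)(P_{u⊥}∇u)) = P_{u⊥}(∇·(P_{u⊥}∇u)) + (((u·∇)u)·∇)u − u (P_{u⊥}∇u : P_{u⊥}∇u).) -/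
/-!
Write `U = u x`, `D a b = ∂_a u_b` and `H a b c = ∂_a ∂_b u_c` at `x`. Differentiating `|u|² = 1`
once and twice gives `U ⬝ ∂_a u = 0` and `U ⬝ ∂_a ∂_b u = -∂_a u ⬝ ∂_b u`, and the product rule
turns each `∂_p (P_{jl} ∂_l u_c)` into `P_{jl} H p l c - (U_j D p l + U_l D p j) D l c`. The rest
is linear algebra with `P = Id - U ⊗ U`, using `P² = P` and `P U = 0`: the left side and
`∇·(P∇u)_i + (((u·∇)u)·∇)u_i` both equal `∑_{p,l} P_{pl} H p l i - (∇·u) ((u·∇)u)_i`, while the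
`U`-component of `∇·(P∇u)` is `-∑ P_{pl} D l s D p s`, which cancels the last term.
-/

open Finset

section Calculus

variable {𝕜 E F G : Type*} [NontriviallyNormedField 𝕜]
  [NormedAddCommGroup E] [NormedSpace 𝕜 E] [NormedAddCommGroup F] [NormedSpace 𝕜 F]
  [NormedAddCommGroup G] [NormedSpace 𝕜 G] {x : E}

theorem fderiv_piLp_apply {ι : Type*} [Fintype ι] {β : ι → Type*}
    [∀ i, NormedAddCommGroup (β i)] [∀ i, NormedSpace 𝕜 (β i)] (p : ENNReal) [Fact (1 ≤ p)]
    {f : E → PiLp p β} (hf : DifferentiableAt 𝕜 f x) (i : ι) (v : E) :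
    fderiv 𝕜 (fun y => f y i) x v = fderiv 𝕜 f x v i := by
  have h := (PiLp.hasFDerivAt_apply (𝕜 := 𝕜) p (f x) i).comp x hf.hasFDerivAt
  exact DFunLike.congr_fun h.fderiv v

theorem fderiv_clm_apply_const {f : E → F →L[𝕜] G} (hf : DifferentiableAt 𝕜 f x) (v : F)
    (w : E) : fderiv 𝕜 (fun y => f y v) x w = fderiv 𝕜 f x w v :=
  DFunLike.congr_fun (HasFDerivAt.fderiv (f := fun y => f y v)
    ((ContinuousLinearMap.apply 𝕜 G v).hasFDerivAt.comp x hf.hasFDerivAt)) w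

end Calculus

section UnitField

variable {E F : Type*} [NormedAddCommGroup E] [NormedSpace ℝ E]
  [NormedAddCommGroup F] [InnerProductSpace ℝ F] {u : E → F} {x : E}

theorem inner_fderiv_eq_zero_of_norm_eq_one (hu : DifferentiableAt ℝ u x)
    (hnorm : ∀ y, ‖u y‖ = 1) (v : E) : inner ℝ (u x) (fderiv ℝ u x v) = 0 := by
  have hconst : (fun y => inner ℝ (u y) (u y)) = fun _ => (1 : ℝ) := by
    funext y; rw [real_inner_self_eq_norm_sq, hnorm, one_pow]
  have h := fderiv_inner_apply ℝ hu hu v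
  rw [hconst, fderiv_const_apply, zero_apply, real_inner_comm (u x)] at h
  linarith

theorem inner_fderiv_fderiv_eq_neg_of_norm_eq_one (hu : Differentiable ℝ u)
    (hu2 : DifferentiableAt ℝ (fderiv ℝ u) x) (hnorm : ∀ y, ‖u y‖ = 1) (v w : E) :
    inner ℝ (u x) (fderiv ℝ (fderiv ℝ u) x w v)
      = -inner ℝ (fderiv ℝ u x w) (fderiv ℝ u x v) := by
  have hconst : (fun y => inner ℝ (u y) (fderiv ℝ u y v)) = fun _ => (0 : ℝ) :=
    funext fun y => inner_fderiv_eq_zero_of_norm_eq_one (hu y) hnorm v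
  have h := fderiv_inner_apply ℝ (hu x) (hu2.clm_apply (differentiableAt_const v)) w
  rw [hconst, fderiv_const_apply, zero_apply, fderiv_clm_apply_const hu2] at h
  linarith

end UnitField

section OrthProj

variable {ι : Type*} [DecidableEq ι]

def orthProj (U : ι → ℝ) (a b : ι) : ℝ := (if a = b then 1 else 0) - U a * U b

theorem orthProj_comm (U : ι → ℝ) (a b : ι) : orthProj U a b = orthProj U b a := by
  simp only [orthProj, eq_comm, mul_comm]

variable [Fintype ι] {U : ι → ℝ}

theorem sum_orthProj_mul (p : ι) (f : ι → ℝ) :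
    ∑ j, orthProj U p j * f j = f p - U p * ∑ j, U j * f j := by
  simp only [orthProj, sub_mul, sum_sub_distrib, ite_mul, one_mul, zero_mul, sum_ite_eq,
    mem_univ, if_true, mul_sum, mul_assoc]

theorem sum_mul_orthProj (hU : ∑ s, U s * U s = 1) (p : ι) :
    ∑ j, U j * orthProj U p j = 0 := by
  rw [← sum_congr rfl fun j _ => mul_comm _ _, sum_orthProj_mul, hU, mul_one, sub_self]

theorem sum_orthProj_mul_orthProj (hU : ∑ s, U s * U s = 1) (p l : ι) :
    ∑ j, orthProj U p j * orthProj U j l = orthProj U p l := by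
  simp only [orthProj_comm U _ l, sum_orthProj_mul, sum_mul_orthProj hU, mul_zero, sub_zero]

theorem sum_orthProj_mul_deriv {D : ι → ι → ℝ} {H : ι → ι → ι → ℝ}
    (hU : ∑ s, U s * U s = 1) (hD : ∀ a, ∑ s, U s * D a s = 0) (i : ι) :
    ∑ j, ∑ p, ∑ l, orthProj U j p *
        (orthProj U j l * H p l i - (U j * D p l + U l * D p j) * D l i)
      = ∑ p, ∑ l, orthProj U p l * H p l i - (∑ p, D p p) * ∑ l, U l * D l i := by
  have summand (p l : ι) : ∑ j, orthProj U j p *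
        (orthProj U j l * H p l i - (U j * D p l + U l * D p j) * D l i)
      = orthProj U p l * H p l i - D p p * (U l * D l i) := by
    have h (j : ι) : orthProj U j p *
        (orthProj U j l * H p l i - (U j * D p l + U l * D p j) * D l i)
      = orthProj U p j * orthProj U j l * H p l i - U j * orthProj U p j * (D p l * D l i)
        - U l * D l i * (orthProj U p j * D p j) := by
      rw [orthProj_comm U j p]; ring
    simp only [h, sum_sub_distrib, ← sum_mul, ← mul_sum, sum_orthProj_mul_orthProj hU,
      sum_mul_orthProj hU, sum_orthProj_mul, hD]
    ring
  rw [sum_comm, sum_mul_sum, ← sum_sub_distrib]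
  refine sum_congr rfl fun p _ => ?_
  rw [sum_comm, ← sum_sub_distrib]
  exact sum_congr rfl fun l _ => summand p l

theorem sum_deriv_orthProj_mul (D : ι → ι → ℝ) (H : ι → ι → ι → ℝ) (i : ι) :
    ∑ k, ∑ l, (orthProj U k l * H k l i - (U k * D k l + U l * D k k) * D l i)
      = ∑ p, ∑ l, orthProj U p l * H p l i - ∑ p, ∑ j, U p * D p j * D j i
        - (∑ p, D p p) * ∑ l, U l * D l i := by
  rw [sum_mul_sum, ← sum_sub_distrib, ← sum_sub_distrib]
  refine sum_congr rfl fun k _ => ?_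
  rw [← sum_sub_distrib, ← sum_sub_distrib]
  exact sum_congr rfl fun l _ => by ring

theorem sum_mul_sum_deriv_orthProj_mul {D : ι → ι → ℝ} {H : ι → ι → ι → ℝ}
    (hD : ∀ a, ∑ s, U s * D a s = 0)
    (hH : ∀ a b, ∑ s, U s * H a b s = -∑ s, D a s * D b s) :
    ∑ j, U j * ∑ k, ∑ l, (orthProj U k l * H k l j - (U k * D k l + U l * D k k) * D l j)
      = -∑ p, ∑ l, ∑ s, orthProj U p l * D l s * D p s := by
  have summand (k l : ι) :
      ∑ j, U j * (orthProj U k l * H k l j - (U k * D k l + U l * D k k) * D l j)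
        = ∑ s, -(orthProj U k l * D l s * D k s) := by
    have h (j : ι) : U j * (orthProj U k l * H k l j - (U k * D k l + U l * D k k) * D l j)
        = orthProj U k l * (U j * H k l j) - (U k * D k l + U l * D k k) * (U j * D l j) := by
      ring
    rw [sum_congr rfl fun j _ => h j, sum_sub_distrib, ← mul_sum, ← mul_sum, hH, hD,
      mul_zero, sub_zero, mul_neg, mul_sum, ← sum_neg_distrib]
    exact sum_congr rfl fun s _ => by ring
  simp only [mul_sum]
  rw [sum_comm]
  simp only [← sum_neg_distrib]
  refine sum_congr rfl fun k _ => ?_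
  rw [sum_comm]
  exact sum_congr rfl fun l _ => summand k l

theorem orthProj_deriv_identity {D : ι → ι → ℝ} {H : ι → ι → ι → ℝ}
    (hU : ∑ s, U s * U s = 1) (hD : ∀ a, ∑ s, U s * D a s = 0)
    (hH : ∀ a b, ∑ s, U s * H a b s = -∑ s, D a s * D b s) (i : ι) :
    ∑ j, ∑ p, ∑ l, orthProj U j p *
        (orthProj U j l * H p l i - (U j * D p l + U l * D p j) * D l i)
      = ∑ j, ∑ k, ∑ l, orthProj U i j *
          (orthProj U k l * H k l j - (U k * D k l + U l * D k k) * D l j)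
        + ∑ p, ∑ j, U p * D p j * D j i
        - U i * ∑ p, ∑ l, ∑ s, orthProj U p l * D l s * D p s := by
  have factor : ∑ j, ∑ k, ∑ l, orthProj U i j *
        (orthProj U k l * H k l j - (U k * D k l + U l * D k k) * D l j)
      = ∑ j, orthProj U i j *
          ∑ k, ∑ l, (orthProj U k l * H k l j - (U k * D k l + U l * D k k) * D l j) := by
    simp only [mul_sum]
  rw [factor, sum_orthProj_mul_deriv hU hD, sum_orthProj_mul, sum_deriv_orthProj_mul,
    sum_mul_sum_deriv_orthProj_mul hD hH]
  ring

end OrthProj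

theorem EuclideanSpace.real_inner_eq_sum {ι : Type*} [Fintype ι] (v w : EuclideanSpace ℝ ι) :
    inner ℝ v w = ∑ s, v s * w s := by
  simp only [inner_eq_star_dotProduct, dotProduct, Pi.star_apply, star_trivial, mul_comm]

section EuclideanField

variable {ι E : Type*} [Fintype ι] [DecidableEq ι] [NormedAddCommGroup E] [NormedSpace ℝ E]
  {u : E → EuclideanSpace ℝ ι}

theorem fderiv_orthProj (hu : Differentiable ℝ u) (x : E) (j l : ι) (w : E) :
    fderiv ℝ (fun y => orthProj (u y) j l) x w
      = -(u x j * fderiv ℝ u x w l + u x l * fderiv ℝ u x w j) := by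
  have hcomp := (differentiable_piLp 2).mp hu
  unfold orthProj
  rw [fderiv_const_sub, fderiv_fun_mul (hcomp j x) (hcomp l x)]
  simp only [neg_apply, add_apply, smul_apply, smul_eq_mul, fderiv_piLp_apply 2 (hu x)]

theorem fderiv_orthProj_mul_fderiv (hu : Differentiable ℝ u)
    (hu2 : Differentiable ℝ (fderiv ℝ u)) (x : E) (j l c : ι) (v w : E) :
    fderiv ℝ (fun y => orthProj (u y) j l * fderiv ℝ u y v c) x w
      = orthProj (u x) j l * fderiv ℝ (fderiv ℝ u) x w v c
        - (u x j * fderiv ℝ u x w l + u x l * fderiv ℝ u x w j) * fderiv ℝ u x v c := by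
  have hP : Differentiable ℝ fun y => orthProj (u y) j l := by
    have hcomp := (differentiable_piLp 2).mp hu
    unfold orthProj
    fun_prop
  have hDv : Differentiable ℝ fun y => fderiv ℝ u y v := hu2.clm_apply (differentiable_const v)
  rw [fderiv_fun_mul (hP x) ((differentiable_piLp 2).mp hDv c x)]
  simp only [add_apply, smul_apply, smul_eq_mul,
    fderiv_piLp_apply 2 (hDv x), fderiv_clm_apply_const (hu2 x), fderiv_orthProj hu]
  ring

end EuclideanField

theorem stmt17_general (d : ℕ)
    (u : EuclideanSpace ℝ (Fin d) → EuclideanSpace ℝ (Fin d))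
    (hu : Differentiable ℝ u) (hu2 : Differentiable ℝ (fderiv ℝ u))
    (hnorm : ∀ x, ‖u x‖ = 1)
    (x : EuclideanSpace ℝ (Fin d))
    (Pf : EuclideanSpace ℝ (Fin d) → Fin d → Fin d → ℝ)
    (hPf : ∀ y j p, Pf y j p = (if j = p then (1 : ℝ) else 0) - u y j * u y p)
    (D : Fin d → Fin d → ℝ)
    (hD : ∀ a b, D a b = fderiv ℝ u x (EuclideanSpace.single a (1 : ℝ)) b) :
    ∀ i, (∑ j, ∑ p, ∑ l, Pf x j p *
          fderiv ℝ (fun y => Pf y j l *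
            fderiv ℝ u y (EuclideanSpace.single l (1 : ℝ)) i) x
            (EuclideanSpace.single p (1 : ℝ)))
      = (∑ j, ∑ k, ∑ l, Pf x i j *
            fderiv ℝ (fun y => Pf y k l *
              fderiv ℝ u y (EuclideanSpace.single l (1 : ℝ)) j) x
              (EuclideanSpace.single k (1 : ℝ)))
        + (∑ p, ∑ j, (u x p * D p j) * D j i)
        - u x i * (∑ p, ∑ l, ∑ s, Pf x p l * D l s * D p s) := by
  obtain rfl : Pf = fun y => orthProj (u y) := funext fun y => funext₂ (hPf y)
  obtain rfl : D = fun a b => fderiv ℝ u x (EuclideanSpace.single a 1) b := funext₂ hD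
  have hU : ∑ s, u x s * u x s = 1 := by
    rw [← EuclideanSpace.real_inner_eq_sum, real_inner_self_eq_norm_sq, hnorm, one_pow]
  intro i
  simp only [fderiv_orthProj_mul_fderiv hu hu2]
  refine orthProj_deriv_identity hU (fun a => ?_) (fun a b => ?_) i
  · rw [← EuclideanSpace.real_inner_eq_sum]
    exact inner_fderiv_eq_zero_of_norm_eq_one (hu x) hnorm _
  · rw [← EuclideanSpace.real_inner_eq_sum, ← EuclideanSpace.real_inner_eq_sum]
    exact inner_fderiv_fderiv_eq_neg_of_norm_eq_one hu (hu2 x) hnorm _ _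

/-- the identity
`Tr_{[12]}((P_{u⊥}∇)(P_{u⊥}∇u)) = P_{u⊥}(∇·(P_{u⊥}∇u)) + (((u·∇)u)·∇)u
  − u (P_{u⊥}∇u : P_{u⊥}∇u)`
for a twice differentiable unit vector field `u`, written componentwise: for every `i`,
`Σ_{j,p,l} P_{jp} ∂_{x_p}(P_{jl} ∂_{x_l}u_i)
  = Σ_{j,k,l} P_{ij} ∂_{x_k}(P_{kl} ∂_{x_l}u_j) + Σ_{p,j} (u_p ∂_{x_p}u_j)(∂_{x_j}u_i)
    − u_i Σ_{p,l,s} P_{pl} (∂_{x_l}u_s)(∂_{x_p}u_s)`,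
where `Pf y j p = δ_{jp} − u_j(y)u_p(y)` and `D a b = ∂_{x_a}u_b(x)`. -/
theorem stmt17 (d : ℕ) (hd : 2 ≤ d)
    (u : EuclideanSpace ℝ (Fin d) → EuclideanSpace ℝ (Fin d))
    (hu : Differentiable ℝ u) (hu2 : Differentiable ℝ (fderiv ℝ u))
    (hnorm : ∀ x, ‖u x‖ = 1)
    (x : EuclideanSpace ℝ (Fin d))
    (Pf : EuclideanSpace ℝ (Fin d) → Fin d → Fin d → ℝ)
    (hPf : ∀ y j p, Pf y j p = (if j = p then (1 : ℝ) else 0) - u y j * u y p)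
    (D : Fin d → Fin d → ℝ)
    (hD : ∀ a b, D a b = fderiv ℝ u x (EuclideanSpace.single a (1 : ℝ)) b) :
    ∀ i, (∑ j, ∑ p, ∑ l, Pf x j p *
          fderiv ℝ (fun y => Pf y j l *
            fderiv ℝ u y (EuclideanSpace.single l (1 : ℝ)) i) x
            (EuclideanSpace.single p (1 : ℝ)))
      = (∑ j, ∑ k, ∑ l, Pf x i j *
            fderiv ℝ (fun y => Pf y k l *
              fderiv ℝ u y (EuclideanSpace.single l (1 : ℝ)) j) x
              (EuclideanSpace.single k (1 : ℝ)))
        + (∑ p, ∑ j, (u x p * D p j) * D j i)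
        - u x i * (∑ p, ∑ l, ∑ s, Pf x p l * D l s * D p s) :=
  stmt17_general d u hu hu2 hnorm x Pf hPf D hD
end
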